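/- arXiv:1512.01154 — 5 statements merged into one kernel-verified Lean document; each statement's English description precedes it below -/
import Mathlib

section
/- Let V be a real Hilbert space and W a real normed vector space with a linear injection ι : W → V satisfying ‖ιw‖_V ≤ ‖w‖_W for all w ∈ W. Let B : W × W → ℝ be bilinear with |B(u,v)| ≤ C_B‖u‖_W‖v‖_W and B(u,u) ≥ σ‖ιu‖_V² for all u,v ∈ W, where σ > 0. Let V_h ⊆ W be a finite-dimensional subspace satisfying the discrete inf-sup condition: for every φ_h ∈ V_h, sup over nonzero ψ_h ∈ V_h of B(φ_h,ψ_h)/‖ψ_h‖_W is at least β‖φ_h‖_W, with β > 0; let Π_h : W → V_h be the elliptic projection determined by B(Π_h u, ψ_h) = B(u, ψ_h) for all ψ_h ∈ V_h. Let T > 0, q : [0,T] → V continuous, φ ∈ C¹([0,T]; W) satisfying ⟨ι(φ'(t)), ιψ_h⟩_V + B(φ(t), ψ_h) = ⟨q(t), ιψ_h⟩_V for all ψ_h ∈ V_h and t ∈ [0,T], and let φ_h ∈ C¹([0,T]; V_h) satisfy φ_h(0) = Π_h(φ(0)) and ⟨ι(φ_h'(t)), ιψ_h⟩_V + B(φ_h(t),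 ψ_h) = ⟨q(t), ιψ_h⟩_V for all ψ_h ∈ V_h and t ∈ [0,T]. Then there is a constant C depending only on C_B, β and σ such that for all t ∈ [0,T]: ‖ι(φ(t)) − ι(φ_h(t))‖_V ≤ C ( inf_{ψ_h ∈ V_h} ‖φ(0) − ψ_h‖_W + inf_{ψ_h ∈ V_h} ‖φ(t) − ψ_h‖_W + ∫₀ᵗ inf_{ψ_h ∈ V_h} ‖φ'(s) − ψ_h‖_W ds ). -/
/-!
Split the error as `φ - φh = (φ - Πh φ) + θ` with `θ = Πh φ - φh ∈ Vh`. The inf-sup condition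
makes `Πh` a bounded projection onto `Vh`, so the first part is controlled by Céa's lemma.
Testing the difference of the two Galerkin equations with `θ`, and using `B (φ - Πh φ) θ = 0`
and coercivity, gives `½ d/dt ‖ι θ‖² ≤ ‖ι (Πh φ' - φ')‖ ‖ι θ‖`. As `θ 0 = 0`, evaluating
`‖ι θ‖²` at a maximum of `‖ι θ‖` on `[0, t]` bounds `‖ι θ t‖` by twice the integral of the
projection error of `φ'`, which Céa's lemma again bounds by the best approximation error.
-/

open scoped RealInnerProductSpace

open Set Metric MeasureTheory

section QuasiOptimality

variable {𝕜 E : Type*} [NormedField 𝕜] [NormedAddCommGroup E] [NormedSpace 𝕜 E]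

theorem Submodule.iInf_norm_sub_eq_infDist (S : Submodule 𝕜 E) (u : E) :
    ⨅ ψ : S, ‖u - (ψ : E)‖ = infDist u S := by
  simp only [infDist_eq_iInf, dist_eq_norm]
  rfl

/-- Quasi-optimality of a bounded projection: `u - P u = (u - ψ) - P (u - ψ)` for `ψ ∈ S`. -/
theorem LinearMap.norm_sub_apply_le_mul_infDist (P : E →ₗ[𝕜] E) {S : Submodule 𝕜 E}
    (hPS : ∀ ψ ∈ S, P ψ = ψ) {c : ℝ} (hc : 0 ≤ c) (hP : ∀ x, ‖P x‖ ≤ c * ‖x‖) (u : E) :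
    ‖u - P u‖ ≤ (1 + c) * infDist u S := by
  rw [mul_comm, ← div_le_iff₀ (by positivity)]
  refine (le_infDist ⟨0, S.zero_mem⟩).2 fun ψ hψ => ?_
  rw [div_le_iff₀ (by positivity), dist_eq_norm]
  calc ‖u - P u‖ = ‖(u - ψ) - P (u - ψ)‖ := by rw [map_sub, hPS ψ hψ, sub_sub_sub_cancel_right]
    _ ≤ ‖u - ψ‖ + c * ‖u - ψ‖ := (norm_sub_le _ _).trans (add_le_add le_rfl (hP _))
    _ = ‖u - ψ‖ * (1 + c) := by ring

end QuasiOptimality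

section GalerkinProjection

variable {W : Type*} [NormedAddCommGroup W] [NormedSpace ℝ W]

def InfSupStable (B : W →ₗ[ℝ] W →ₗ[ℝ] ℝ) (Vh : Submodule ℝ W) (β : ℝ) : Prop :=
  ∀ w ∈ Vh, β * ‖w‖ ≤ ⨆ ψ : {x : W // x ∈ Vh ∧ x ≠ 0}, B w ψ / ‖(ψ : W)‖

structure IsEllipticProjection (B : W →ₗ[ℝ] W →ₗ[ℝ] ℝ) (Vh : Submodule ℝ W) (P : W →ₗ[ℝ] W) :
    Prop where
  mem : ∀ u, P u ∈ Vh
  orthogonal : ∀ u, ∀ ψ ∈ Vh, B (P u) ψ = B u ψ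

variable {B : W →ₗ[ℝ] W →ₗ[ℝ] ℝ} {Vh : Submodule ℝ W} {C β : ℝ}

theorem InfSupStable.mul_norm_le (hinfsup : InfSupStable B Vh β)
    (hB : ∀ u v, B u v ≤ C * ‖u‖ * ‖v‖) (hC : 0 ≤ C) {v w : W} (hw : w ∈ Vh)
    (hvw : ∀ χ ∈ Vh, B w χ = B v χ) : β * ‖w‖ ≤ C * ‖v‖ := by
  refine (hinfsup w hw).trans (Real.iSup_le (fun ⟨ψ, hψ, hψ0⟩ => ?_) (by positivity))
  rw [hvw ψ hψ, div_le_iff₀ (norm_pos_iff.2 hψ0)]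
  exact hB v ψ

namespace IsEllipticProjection

variable {P : W →ₗ[ℝ] W}

theorem norm_apply_le (hP : IsEllipticProjection B Vh P) (hinfsup : InfSupStable B Vh β)
    (hB : ∀ u v, B u v ≤ C * ‖u‖ * ‖v‖) (hC : 0 ≤ C) (hβ : 0 < β) (u : W) :
    ‖P u‖ ≤ C / β * ‖u‖ := by
  rw [div_mul_eq_mul_div, le_div_iff₀ hβ, mul_comm]
  exact hinfsup.mul_norm_le hB hC (hP.mem u) (hP.orthogonal u)

theorem apply_eq_self (hP : IsEllipticProjection B Vh P) (hinfsup : InfSupStable B Vh β)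
    (hB : ∀ u v, B u v ≤ C * ‖u‖ * ‖v‖) (hC : 0 ≤ C) (hβ : 0 < β) {ψ : W} (hψ : ψ ∈ Vh) :
    P ψ = ψ := by
  have h := hinfsup.mul_norm_le hB hC (v := 0) (Vh.sub_mem (hP.mem ψ) hψ) fun χ hχ => by
    simp only [map_sub, LinearMap.sub_apply, hP.orthogonal ψ χ hχ, sub_self, map_zero,
      LinearMap.zero_apply]
  rw [norm_zero, mul_zero] at h
  exact sub_eq_zero.1 (norm_le_zero_iff.1 (nonpos_of_mul_nonpos_right h hβ))

/-- Céa's lemma. -/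
theorem norm_sub_apply_le (hP : IsEllipticProjection B Vh P) (hinfsup : InfSupStable B Vh β)
    (hB : ∀ u v, B u v ≤ C * ‖u‖ * ‖v‖) (hC : 0 ≤ C) (hβ : 0 < β) (u : W) :
    ‖u - P u‖ ≤ (1 + C / β) * infDist u Vh :=
  P.norm_sub_apply_le_mul_infDist (fun _ => hP.apply_eq_self hinfsup hB hC hβ) (by positivity)
    (hP.norm_apply_le hinfsup hB hC hβ) u

end IsEllipticProjection

end GalerkinProjection

section EnergyEstimate

variable {V : Type*} [NormedAddCommGroup V] [InnerProductSpace ℝ V]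

theorem norm_sq_sub_norm_sq_eq_integral_inner {f f' : ℝ → V} {a b : ℝ} (hab : a ≤ b)
    (hf : ∀ s ∈ Icc a b, HasDerivWithinAt f (f' s) (Icc a b) s)
    (hf' : ContinuousOn f' (Icc a b)) :
    ‖f b‖ ^ 2 - ‖f a‖ ^ 2 = ∫ s in a..b, 2 * ⟪f s, f' s⟫ := by
  have hfc : ContinuousOn f (Icc a b) := fun s hs => (hf s hs).continuousWithinAt
  refine (intervalIntegral.integral_eq_sub_of_hasDerivAt_of_le hab
    (hfc.norm.pow 2) (fun s hs => ?_) ?_).symm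
  · exact (hf s (Ioo_subset_Icc_self hs)).norm_sq.hasDerivAt (Icc_mem_nhds hs.1 hs.2)
  · exact (continuousOn_const.mul (hfc.inner hf')).intervalIntegrable_of_Icc hab

theorem norm_le_two_mul_integral_of_inner_le {f f' : ℝ → V} {g : ℝ → ℝ} {a b : ℝ} (hab : a ≤ b)
    (hf : ∀ s ∈ Icc a b, HasDerivWithinAt f (f' s) (Icc a b) s)
    (hf' : ContinuousOn f' (Icc a b)) (hfa : f a = 0)
    (hg : IntervalIntegrable g volume a b) (hg0 : ∀ s ∈ Icc a b, 0 ≤ g s)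
    (hfg : ∀ s ∈ Icc a b, ⟪f' s, f s⟫ ≤ g s * ‖f s‖) :
    ‖f b‖ ≤ 2 * ∫ s in a..b, g s := by
  obtain ⟨c, hc, hmax⟩ := isCompact_Icc.exists_isMaxOn (nonempty_Icc.2 hab)
    (fun s hs => (hf s hs).continuousWithinAt.norm)
  set M := ‖f c‖
  have hac : Icc a c ⊆ Icc a b := Icc_subset_Icc_right hc.2
  have hg_ac : IntervalIntegrable g volume a c :=
    hg.mono_set (by rwa [uIcc_of_le hc.1, uIcc_of_le hab])
  have hI : 0 ≤ ∫ s in a..b, g s := intervalIntegral.integral_nonneg hab hg0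
  have hM : M ^ 2 ≤ M * (2 * ∫ s in a..b, g s) := calc
    M ^ 2 = ∫ s in a..c, 2 * ⟪f s, f' s⟫ := by
      rw [← norm_sq_sub_norm_sq_eq_integral_inner hc.1 (fun s hs => (hf s (hac hs)).mono hac)
        (hf'.mono hac), hfa, norm_zero]
      ring
    _ ≤ ∫ s in a..c, 2 * M * g s := by
      have hfc : ContinuousOn f (Icc a c) := fun s hs => (hf s (hac hs)).continuousWithinAt.mono hac
      refine intervalIntegral.integral_mono_on hc.1
        ((continuousOn_const.mul (hfc.inner (hf'.mono hac))).intervalIntegrable_of_Icc hc.1)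
        (hg_ac.const_mul _) fun s hs => ?_
      have hfs : ‖f s‖ ≤ M := hmax (hac hs)
      rw [real_inner_comm]
      nlinarith [hfg s (hac hs), hg0 s (hac hs)]
    _ = 2 * M * ∫ s in a..c, g s := intervalIntegral.integral_const_mul _ _
    _ ≤ 2 * M * ∫ s in a..b, g s := by
      refine mul_le_mul_of_nonneg_left (intervalIntegral.integral_mono_interval le_rfl hc.1 hc.2
        ((ae_restrict_mem measurableSet_Ioc).mono fun s hs => ?_) hg) (by positivity)
      exact hg0 s (Ioc_subset_Icc_self hs)
    _ = M * (2 * ∫ s in a..b, g s) := by ring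
  have hfb : ‖f b‖ ≤ M := hmax (right_mem_Icc.2 hab)
  nlinarith [norm_nonneg (f c)]

end EnergyEstimate

section SemidiscreteError

variable {V : Type*} [NormedAddCommGroup V] [InnerProductSpace ℝ V]
  {W : Type*} [NormedAddCommGroup W] [NormedSpace ℝ W]
  {B : W →ₗ[ℝ] W →ₗ[ℝ] ℝ} {Vh : Submodule ℝ W}

theorem IsEllipticProjection.inner_apply_sub_le {ι : W →ₗ[ℝ] V} {P : W →ₗ[ℝ] W}
    (hP : IsEllipticProjection B Vh P) (hcoer : ∀ u, 0 ≤ B u u) {x x' y y' : W}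
    (hy : y ∈ Vh)
    (horth : ∀ ψ ∈ Vh, ⟪ι x', ι ψ⟫ + B x ψ = ⟪ι y', ι ψ⟫ + B y ψ) :
    ⟪ι (P x' - y'), ι (P x - y)⟫ ≤ ‖ι (P x' - x')‖ * ‖ι (P x - y)‖ := by
  have hθ : P x - y ∈ Vh := Vh.sub_mem (hP.mem x) hy
  have h := horth _ hθ
  have hPx := hP.orthogonal x _ hθ
  have hθθ := hcoer (P x - y)
  calc ⟪ι (P x' - y'), ι (P x - y)⟫ = ⟪ι (P x' - x'), ι (P x - y)⟫ - B (P x - y) (P x - y) := by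
        simp only [map_sub, LinearMap.sub_apply, inner_sub_left] at h hPx ⊢
        linarith
    _ ≤ ⟪ι (P x' - x'), ι (P x - y)⟫ := by linarith
    _ ≤ ‖ι (P x' - x')‖ * ‖ι (P x - y)‖ := real_inner_le_norm _ _

theorem IsEllipticProjection.norm_apply_sub_le_two_mul_integral {ι : W →L[ℝ] V} {P : W →L[ℝ] W}
    (hP : IsEllipticProjection B Vh P) (hcoer : ∀ u, 0 ≤ B u u)
    {φ φ' φh φh' : ℝ → W} {g : ℝ → ℝ} {t : ℝ} (ht : 0 ≤ t)
    (hφ : ∀ s ∈ Icc 0 t, HasDerivWithinAt φ (φ' s) (Icc 0 t) s) (hφ' : ContinuousOn φ' (Icc 0 t))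
    (hφh : ∀ s ∈ Icc 0 t, HasDerivWithinAt φh (φh' s) (Icc 0 t) s)
    (hφh' : ContinuousOn φh' (Icc 0 t)) (hφhVh : ∀ s, φh s ∈ Vh) (h0 : φh 0 = P (φ 0))
    (horth : ∀ s ∈ Icc 0 t, ∀ ψ ∈ Vh,
      ⟪ι (φ' s), ι ψ⟫ + B (φ s) ψ = ⟪ι (φh' s), ι ψ⟫ + B (φh s) ψ)
    (hg : IntervalIntegrable g volume 0 t) (hφ'g : ∀ s ∈ Icc 0 t, ‖ι (P (φ' s) - φ' s)‖ ≤ g s) :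
    ‖ι (P (φ t) - φh t)‖ ≤ 2 * ∫ s in 0..t, g s := by
  refine norm_le_two_mul_integral_of_inner_le (f := fun s => ι (P (φ s) - φh s))
    (f' := fun s => ι (P (φ' s) - φh' s)) ht (fun s hs => ?_) ?_ (by simp [h0]) hg
    (fun s hs => (norm_nonneg _).trans (hφ'g s hs)) (fun s hs => ?_)
  · exact ι.hasFDerivAt.comp_hasDerivWithinAt s
      ((P.hasFDerivAt.comp_hasDerivWithinAt s (hφ s hs)).sub (hφh s hs))
  · exact ι.continuous.comp_continuousOn ((P.continuous.comp_continuousOn hφ').sub hφh')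
  · exact (hP.inner_apply_sub_le hcoer (hφhVh s) (horth s hs)).trans
      (mul_le_mul_of_nonneg_right (hφ'g s hs) (norm_nonneg _))

theorem IsEllipticProjection.norm_sub_le_infDist_add_integral {ι : W →ₗ[ℝ] V} {P : W →ₗ[ℝ] W}
    {C β : ℝ} (hP : IsEllipticProjection B Vh P) (hinfsup : InfSupStable B Vh β)
    (hB : ∀ u v, B u v ≤ C * ‖u‖ * ‖v‖) (hC : 0 ≤ C) (hβ : 0 < β) (hcoer : ∀ u, 0 ≤ B u u)
    (hι : ∀ w, ‖ι w‖ ≤ ‖w‖) {φ φ' φh φh' : ℝ → W} {t : ℝ} (ht : 0 ≤ t)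
    (hφ : ∀ s ∈ Icc 0 t, HasDerivWithinAt φ (φ' s) (Icc 0 t) s) (hφ' : ContinuousOn φ' (Icc 0 t))
    (hφh : ∀ s ∈ Icc 0 t, HasDerivWithinAt φh (φh' s) (Icc 0 t) s)
    (hφh' : ContinuousOn φh' (Icc 0 t)) (hφhVh : ∀ s, φh s ∈ Vh) (h0 : φh 0 = P (φ 0))
    (horth : ∀ s ∈ Icc 0 t, ∀ ψ ∈ Vh,
      ⟪ι (φ' s), ι ψ⟫ + B (φ s) ψ = ⟪ι (φh' s), ι ψ⟫ + B (φh s) ψ) :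
    ‖ι (φ t) - ι (φh t)‖ ≤
      (1 + C / β) * (infDist (φ t) Vh + 2 * ∫ s in 0..t, infDist (φ' s) Vh) := by
  have hcea := hP.norm_sub_apply_le hinfsup hB hC hβ
  have hdist : ContinuousOn (fun s => (1 + C / β) * infDist (φ' s) Vh) (Icc 0 t) :=
    continuousOn_const.mul ((continuous_infDist_pt _).comp_continuousOn hφ')
  have herr : ‖ι (P (φ t) - φh t)‖ ≤ 2 * ∫ s in 0..t, (1 + C / β) * infDist (φ' s) Vh :=
    norm_apply_sub_le_two_mul_integral (ι := ι.mkContinuous 1 (by simpa using hι))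
      (P := P.mkContinuous (C / β) (hP.norm_apply_le hinfsup hB hC hβ)) hP hcoer ht hφ hφ' hφh
      hφh' hφhVh h0 horth (hdist.intervalIntegrable_of_Icc ht)
      (fun s _ => (hι _).trans (by rw [norm_sub_rev]; exact hcea _))
  rw [intervalIntegral.integral_const_mul] at herr
  calc ‖ι (φ t) - ι (φh t)‖ = ‖ι (φ t - P (φ t)) + ι (P (φ t) - φh t)‖ := by
        rw [← map_add, sub_add_sub_cancel, map_sub]
    _ ≤ (1 + C / β) * infDist (φ t) Vh + 2 * ((1 + C / β) * ∫ s in 0..t, infDist (φ' s) Vh) :=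
        (norm_add_le _ _).trans (add_le_add ((hι _).trans (hcea _)) herr)
    _ = _ := by ring

end SemidiscreteError

/-- Abstract error estimate for the Galerkin semi-discretization of the evolution
problem ∂ₜφ + (S+H)φ = q arising from radiative transfer: there is a constant C
depending only on the continuity constant C_B, the inf-sup constant β and the
coercivity constant σ such that the semi-discrete error is bounded by best
approximation errors of the initial value, the solution and its time derivative. -/
theorem stmt_0 (C_B β σ : ℝ) (hσ : 0 < σ) (hβ : 0 < β) :
    ∃ C : ℝ, 0 < C ∧
      ∀ (V : Type) [NormedAddCommGroup V] [InnerProductSpace ℝ V] [CompleteSpace V]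
        (W : Type) [NormedAddCommGroup W] [NormedSpace ℝ W]
        (ι : W →ₗ[ℝ] V),
        Function.Injective ι →
        (∀ w : W, ‖ι w‖ ≤ ‖w‖) →
        ∀ B : W →ₗ[ℝ] W →ₗ[ℝ] ℝ,
        (∀ u v : W, |B u v| ≤ C_B * ‖u‖ * ‖v‖) →
        (∀ u : W, σ * ‖ι u‖ ^ 2 ≤ B u u) →
        ∀ Vh : Submodule ℝ W, FiniteDimensional ℝ Vh →
        (∀ φh ∈ Vh, β * ‖φh‖ ≤ ⨆ ψh : {x : W // x ∈ Vh ∧ x ≠ 0}, B φh ψh / ‖(ψh : W)‖) →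
        ∀ Proj : W →ₗ[ℝ] W,
        (∀ u : W, Proj u ∈ Vh) →
        (∀ u : W, ∀ ψh ∈ Vh, B (Proj u) ψh = B u ψh) →
        ∀ T : ℝ, 0 < T →
        ∀ q : ℝ → V, ContinuousOn q (Set.Icc 0 T) →
        ∀ φ φ' : ℝ → W,
        (∀ t ∈ Set.Icc 0 T, HasDerivWithinAt φ (φ' t) (Set.Icc 0 T) t) →
        ContinuousOn φ' (Set.Icc 0 T) →
        (∀ t ∈ Set.Icc 0 T, ∀ ψh ∈ Vh, ⟪ι (φ' t), ι ψh⟫ + B (φ t) ψh = ⟪q t, ι ψh⟫) →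
        ∀ φh φh' : ℝ → W,
        (∀ t : ℝ, φh t ∈ Vh) →
        (∀ t ∈ Set.Icc 0 T, HasDerivWithinAt φh (φh' t) (Set.Icc 0 T) t) →
        ContinuousOn φh' (Set.Icc 0 T) →
        φh 0 = Proj (φ 0) →
        (∀ t ∈ Set.Icc 0 T, ∀ ψh ∈ Vh, ⟪ι (φh' t), ι ψh⟫ + B (φh t) ψh = ⟪q t, ι ψh⟫) →
        ∀ t ∈ Set.Icc 0 T,
          ‖ι (φ t) - ι (φh t)‖ ≤
            C * ((⨅ ψh : Vh, ‖φ 0 - (ψh : W)‖) + (⨅ ψh : Vh, ‖φ t - (ψh : W)‖) +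
              ∫ s in (0:ℝ)..t, ⨅ ψh : Vh, ‖φ' s - (ψh : W)‖) := by
  set K := 1 + max C_B 0 / β
  refine ⟨2 * K, by positivity, ?_⟩
  intro V _ _ _ W _ _ ι _ hι B hBC hcoer Vh _ hinfsup P hPmem hPorth T _ q _ φ φ' hφ hφ' hφeq
    φh φh' hφhVh hφh hφh' h0 hφheq t ht
  have hB (u v : W) : B u v ≤ max C_B 0 * ‖u‖ * ‖v‖ :=
    (le_abs_self _).trans ((hBC u v).trans (by gcongr; exact le_max_left _ _))
  have hsub : Icc 0 t ⊆ Icc 0 T := Icc_subset_Icc_right ht.2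
  have hbound := IsEllipticProjection.norm_sub_le_infDist_add_integral ⟨hPmem, hPorth⟩ hinfsup hB
    (le_max_right _ _) hβ (fun u => (by positivity : 0 ≤ σ * ‖ι u‖ ^ 2).trans (hcoer u)) hι ht.1
    (fun s hs => (hφ s (hsub hs)).mono hsub) (hφ'.mono hsub)
    (fun s hs => (hφh s (hsub hs)).mono hsub) (hφh'.mono hsub) hφhVh h0
    (fun s hs ψ hψ => (hφeq s (hsub hs) ψ hψ).trans (hφheq s (hsub hs) ψ hψ).symm)
  have hd (x : W) : 0 ≤ infDist x Vh := infDist_nonneg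
  have hI : 0 ≤ ∫ s in 0..t, infDist (φ' s) Vh :=
    intervalIntegral.integral_nonneg ht.1 fun s _ => hd (φ' s)
  have hK : 0 ≤ K := by positivity
  simp only [Submodule.iInf_norm_sub_eq_infDist]
  linarith [mul_nonneg hK (hd (φ 0)), mul_nonneg hK (hd (φ t)), mul_nonneg hK hI]
end

section
/- Let V be a real Hilbert space and W a real normed vector space with a linear injection ι : W → V satisfying ‖ιw‖_V ≤ ‖w‖_W. Let B : W × W → ℝ be bilinear with |B(u,v)| ≤ C_B‖u‖_W‖v‖_W and B(u,u) ≥ σ‖ιu‖_V² for all u,v ∈ W, σ > 0. Let V_h ⊆ W be a finite-dimensional subspace satisfying the discrete inf-sup condition with constant β > 0 (for every φ_h ∈ V_h, sup over nonzero ψ_h ∈ V_h of B(φ_h,ψ_h)/‖ψ_h‖_W ≥ β‖φ_h‖_W), and Π_h : W → V_h the elliptic projection (B(Π_h u, ψ_h) = B(u,ψ_h) for all ψ_h ∈ V_h). Let T > 0, q : [0,T] → V continuous, and φ ∈ C²([0,T]; W) satisfy ⟨ι(φ'(t)), ιψ_h⟩_V + B(φ(t), ψ_h) = ⟨q(t),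 ιψ_h⟩_V for all ψ_h ∈ V_h and t ∈ [0,T]. Fix a time step τ with 0 < τ ≤ 1/(2σ), set tⁿ = nτ, and let φ_h⁰ = Π_h(φ(0)) and, for n ≥ 1 with tⁿ ≤ T, let φ_hⁿ ∈ V_h satisfy ⟨(φ_hⁿ − φ_hⁿ⁻¹)/τ, ιψ_h⟩_V + B(φ_hⁿ, ψ_h) = ⟨q(tⁿ), ιψ_h⟩_V for all ψ_h ∈ V_h. Then there is a constant C depending only on C_B, β and σ such that for all such n: ‖ι(φ(tⁿ)) − ι(φ_hⁿ)‖_V² ≤ C ( inf_{ψ_h ∈ V_h} ‖φ(tⁿ) − ψ_h‖_W² + sup_{0 ≤ t ≤ tⁿ} inf_{ψ_h ∈ V_h} ‖φ'(t) − ψ_h‖_W² + τ² sup_{0 ≤ t ≤ tⁿ} ‖ι(φ''(t))‖_V² ). -/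
/-!
Thanks to the discrete inf-sup condition the elliptic projection `Π` is bounded by `C_B / β`
and fixes `V_h`, which gives the Céa-type estimate `‖w - Π w‖ ≤ (1 + C_B / β) ‖w - ψ_h‖`.
Split the error as `φ(tⁿ) - φ_hⁿ = (φ - Πφ)(tⁿ) + θⁿ` with `θⁿ = Πφ(tⁿ) - φ_hⁿ ∈ V_h`.
Galerkin orthogonality of `Π` turns the scheme into a backward Euler step for `θ` whose residual
`τ⁻¹ (Πφ(tⁿ) - Πφ(tⁿ⁻¹)) - φ'(tⁿ)` the mean value inequality bounds by the best-approximation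
error of `φ'` plus `τ sup ‖ι φ''‖`. Testing the step with `θⁿ` and using coercivity gives
`σ (1 + στ) ‖ιθⁿ‖² ≤ σ ‖ιθⁿ⁻¹‖² + τ ‖residual‖²`, so a bound `‖ιθ‖ ≤ r / σ` propagates from
`θ⁰ = 0`.
-/

open scoped RealInnerProductSpace

open Set

def DiscreteInfSup {W : Type*} [NormedAddCommGroup W] [NormedSpace ℝ W]
    (B : W →ₗ[ℝ] W →ₗ[ℝ] ℝ) (Vh : Submodule ℝ W) (β : ℝ) : Prop :=
  ∀ φh ∈ Vh, β * ‖φh‖ ≤ ⨆ ψh : {x : W // x ∈ Vh ∧ x ≠ 0}, B φh ψh / ‖(ψh : W)‖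

theorem le_iSup_Icc_of_le_of_continuousOn {f g : ℝ → ℝ} {a b t : ℝ}
    (hg : ContinuousOn g (Icc a b)) (hfg : ∀ s ∈ Icc a b, f s ≤ g s) (ht : t ∈ Icc a b) :
    f t ≤ ⨆ s : Icc a b, f s := by
  obtain ⟨M, hM⟩ := isCompact_Icc.bddAbove_image hg
  refine le_ciSup (f := fun s : Icc a b => f s) ⟨M, ?_⟩ ⟨t, ht⟩
  rintro _ ⟨s, rfl⟩
  exact (hfg s s.2).trans (hM ⟨s, s.2, rfl⟩)

theorem norm_le_sqrt_iSup_sq {E : Type*} [NormedAddCommGroup E] {g : ℝ → E} {a b t : ℝ}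
    (hg : ContinuousOn g (Icc a b)) (ht : t ∈ Icc a b) :
    ‖g t‖ ≤ √(⨆ s : Icc a b, ‖g s‖ ^ 2) :=
  (le_abs_self _).trans <| Real.abs_le_sqrt <|
    le_iSup_Icc_of_le_of_continuousOn (hg.norm.pow 2) (fun _ _ => le_rfl) ht

section GalerkinProjection

variable {W : Type*} [NormedAddCommGroup W] [NormedSpace ℝ W]
  {B : W →ₗ[ℝ] W →ₗ[ℝ] ℝ} {Vh : Submodule ℝ W} {β C_B : ℝ} {P : W →ₗ[ℝ] W}

theorem DiscreteInfSup.mul_norm_le (hinfsup : DiscreteInfSup B Vh β) {u : W} (hu : u ∈ Vh)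
    {M : ℝ} (hM : 0 ≤ M) (hBu : ∀ ψ ∈ Vh, B u ψ ≤ M * ‖ψ‖) : β * ‖u‖ ≤ M :=
  (hinfsup u hu).trans <|
    Real.iSup_le (fun ψ => div_le_of_le_mul₀ (norm_nonneg _) hM (hBu ψ ψ.2.1)) hM

theorem DiscreteInfSup.norm_proj_le (hinfsup : DiscreteInfSup B Vh β) (hβ : 0 < β)
    (hCB : 0 ≤ C_B) (hB : ∀ u v, |B u v| ≤ C_B * ‖u‖ * ‖v‖) (hPm : ∀ u, P u ∈ Vh)
    (hPB : ∀ u, ∀ ψ ∈ Vh, B (P u) ψ = B u ψ) (u : W) : ‖P u‖ ≤ C_B / β * ‖u‖ := by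
  rw [div_mul_eq_mul_div, le_div_iff₀' hβ]
  refine hinfsup.mul_norm_le (hPm u) (by positivity) fun ψ hψ => ?_
  rw [hPB u ψ hψ]
  exact (le_abs_self _).trans (hB u ψ)

theorem DiscreteInfSup.proj_eq_self (hinfsup : DiscreteInfSup B Vh β) (hβ : 0 < β)
    (hPm : ∀ u, P u ∈ Vh) (hPB : ∀ u, ∀ ψ ∈ Vh, B (P u) ψ = B u ψ) {ψ : W} (hψ : ψ ∈ Vh) :
    P ψ = ψ := by
  have h : β * ‖P ψ - ψ‖ ≤ β * 0 := by
    rw [mul_zero]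
    exact hinfsup.mul_norm_le (Vh.sub_mem (hPm ψ) hψ) le_rfl fun χ hχ => by
      simp [hPB ψ χ hχ]
  rw [← sub_eq_zero, ← norm_le_zero_iff]
  exact le_of_mul_le_mul_left h hβ

theorem DiscreteInfSup.norm_sub_proj_le (hinfsup : DiscreteInfSup B Vh β) (hβ : 0 < β)
    (hCB : 0 ≤ C_B) (hB : ∀ u v, |B u v| ≤ C_B * ‖u‖ * ‖v‖) (hPm : ∀ u, P u ∈ Vh)
    (hPB : ∀ u, ∀ ψ ∈ Vh, B (P u) ψ = B u ψ) (w : W) {ψ : W} (hψ : ψ ∈ Vh) :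
    ‖w - P w‖ ≤ (1 + C_B / β) * ‖w - ψ‖ :=
  calc ‖w - P w‖ = ‖(w - ψ) + P (ψ - w)‖ := by
        rw [map_sub, hinfsup.proj_eq_self hβ hPm hPB hψ]; abel_nf
    _ ≤ ‖w - ψ‖ + C_B / β * ‖ψ - w‖ :=
        norm_add_le_of_le le_rfl (hinfsup.norm_proj_le hβ hCB hB hPm hPB _)
    _ = (1 + C_B / β) * ‖w - ψ‖ := by rw [norm_sub_rev ψ]; ring

theorem DiscreteInfSup.norm_sub_proj_le_mul_sqrt_iInf (hinfsup : DiscreteInfSup B Vh β)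
    (hβ : 0 < β) (hCB : 0 ≤ C_B) (hB : ∀ u v, |B u v| ≤ C_B * ‖u‖ * ‖v‖)
    (hPm : ∀ u, P u ∈ Vh) (hPB : ∀ u, ∀ ψ ∈ Vh, B (P u) ψ = B u ψ) (w : W) :
    ‖w - P w‖ ≤ (1 + C_B / β) * √(⨅ ψ : Vh, ‖w - ψ‖ ^ 2) := by
  have hK : 0 ≤ 1 + C_B / β := by positivity
  have hsq : ‖w - P w‖ ^ 2 ≤ (1 + C_B / β) ^ 2 * ⨅ ψ : Vh, ‖w - ψ‖ ^ 2 := by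
    rw [Real.mul_iInf_of_nonneg (sq_nonneg _)]
    refine le_ciInf fun ψ => ?_
    rw [← mul_pow]
    exact pow_le_pow_left₀ (norm_nonneg _) (hinfsup.norm_sub_proj_le hβ hCB hB hPm hPB w ψ.2) 2
  rw [← Real.sqrt_sq hK, ← Real.sqrt_mul (sq_nonneg _)]
  simpa using Real.abs_le_sqrt hsq

theorem DiscreteInfSup.norm_sub_proj_le_mul_sqrt_iSup (hinfsup : DiscreteInfSup B Vh β)
    (hβ : 0 < β) (hCB : 0 ≤ C_B) (hB : ∀ u v, |B u v| ≤ C_B * ‖u‖ * ‖v‖)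
    (hPm : ∀ u, P u ∈ Vh) (hPB : ∀ u, ∀ ψ ∈ Vh, B (P u) ψ = B u ψ) {f : ℝ → W} {a b t : ℝ}
    (hf : ContinuousOn f (Icc a b)) (ht : t ∈ Icc a b) :
    ‖f t - P (f t)‖ ≤ (1 + C_B / β) * √(⨆ s : Icc a b, ⨅ ψ : Vh, ‖f s - ψ‖ ^ 2) := by
  refine (hinfsup.norm_sub_proj_le_mul_sqrt_iInf hβ hCB hB hPm hPB _).trans <|
    mul_le_mul_of_nonneg_left (Real.sqrt_le_sqrt ?_) (by positivity)
  refine le_iSup_Icc_of_le_of_continuousOn (f := fun s => ⨅ ψ : Vh, ‖f s - ψ‖ ^ 2)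
    (hf.norm.pow 2) (fun s _ => ?_) ht
  exact (ciInf_le ⟨0, by rintro _ ⟨ψ, rfl⟩; positivity⟩ (0 : Vh)).trans (by simp)

end GalerkinProjection

section BackwardDifference

variable {E : Type*} [NormedAddCommGroup E] [NormedSpace ℝ E]

theorem norm_smul_inv_sub_le_of_norm_deriv_le {f f' : ℝ → E} {t τ M : ℝ} (hτ : 0 < τ)
    (hf : ∀ s ∈ Icc t (t + τ), HasDerivWithinAt f (f' s) (Icc t (t + τ)) s)
    (hf' : ∀ s ∈ Icc t (t + τ), ‖f' s‖ ≤ M) : ‖τ⁻¹ • (f (t + τ) - f t)‖ ≤ M := by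
  have h := (convex_Icc t (t + τ)).norm_image_sub_le_of_norm_hasDerivWithin_le hf hf'
    (left_mem_Icc.2 (by linarith)) (right_mem_Icc.2 (by linarith))
  rw [add_sub_cancel_left, Real.norm_of_nonneg hτ.le] at h
  rw [norm_smul, norm_inv, Real.norm_of_nonneg hτ.le, inv_mul_le_iff₀ hτ, mul_comm]
  exact h

theorem norm_smul_inv_sub_sub_deriv_le {g g' g'' : ℝ → E} {t τ M : ℝ} (hτ : 0 < τ)
    (hg : ∀ s ∈ Icc t (t + τ), HasDerivWithinAt g (g' s) (Icc t (t + τ)) s)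
    (hg' : ∀ s ∈ Icc t (t + τ), HasDerivWithinAt g' (g'' s) (Icc t (t + τ)) s)
    (hg'' : ∀ s ∈ Icc t (t + τ), ‖g'' s‖ ≤ M) :
    ‖τ⁻¹ • (g (t + τ) - g t) - g' (t + τ)‖ ≤ M * τ := by
  have hend : t + τ ∈ Icc t (t + τ) := right_mem_Icc.2 (by linarith)
  have hdev : ∀ s ∈ Icc t (t + τ), ‖g' s - g' (t + τ)‖ ≤ M * τ := by
    intro s hs
    refine ((convex_Icc t (t + τ)).norm_image_sub_le_of_norm_hasDerivWithin_le hg' hg''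
      hend hs).trans (mul_le_mul_of_nonneg_left ?_ ((norm_nonneg _).trans (hg'' s hs)))
    rw [Real.norm_eq_abs, abs_le]
    constructor <;> linarith [hs.1, hs.2]
  have hlin : ∀ s ∈ Icc t (t + τ), HasDerivWithinAt (fun r => g r - r • g' (t + τ))
      (g' s - g' (t + τ)) (Icc t (t + τ)) s := fun s hs => by
    simpa using (hg s hs).fun_sub ((hasDerivWithinAt_id s _).smul_const (g' (t + τ)))
  -- the difference quotient of `g - (· • g' (t + τ))` is the consistency error
  have h := norm_smul_inv_sub_le_of_norm_deriv_le hτ hlin hdev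
  have hdiff : (g (t + τ) - (t + τ) • g' (t + τ)) - (g t - t • g' (t + τ))
      = (g (t + τ) - g t) - τ • g' (t + τ) := by
    rw [add_smul]; abel
  rwa [hdiff, smul_sub, smul_smul, inv_mul_cancel₀ hτ.ne', one_smul] at h

end BackwardDifference

section Energy

variable {V : Type*} [NormedAddCommGroup V] [InnerProductSpace ℝ V]

theorem backwardEuler_energy_step {x y e : V} {σ τ : ℝ} (hσ : 0 ≤ σ) (hτ : 0 < τ)
    (h : ⟪τ⁻¹ • (x - y), x⟫ + σ * ‖x‖ ^ 2 ≤ ⟪e, x⟫) :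
    σ * (1 + σ * τ) * ‖x‖ ^ 2 ≤ σ * ‖y‖ ^ 2 + τ * ‖e‖ ^ 2 := by
  rw [real_inner_smul_left, inner_sub_left, real_inner_self_eq_norm_sq] at h
  have hτh := mul_le_mul_of_nonneg_left h hτ.le
  rw [mul_add, ← mul_assoc, mul_inv_cancel₀ hτ.ne', one_mul] at hτh
  have h1 : ‖x‖ ^ 2 + τ * σ * ‖x‖ ^ 2 ≤ ‖y‖ * ‖x‖ + τ * (‖e‖ * ‖x‖) := by
    nlinarith [real_inner_le_norm y x, real_inner_le_norm e x]
  -- Young's inequality on both cross terms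
  nlinarith [mul_le_mul_of_nonneg_left h1 hσ, mul_nonneg hσ (sq_nonneg (‖x‖ - ‖y‖)),
    mul_nonneg hτ.le (sq_nonneg (σ * ‖x‖ - ‖e‖))]

theorem backwardEuler_norm_le {x e : ℕ → V} {σ τ r : ℝ} (hσ : 0 < σ) (hτ : 0 < τ)
    (hr : 0 ≤ r) (h0 : x 0 = 0) {n : ℕ}
    (hstep : ∀ k < n, ⟪τ⁻¹ • (x (k + 1) - x k), x (k + 1)⟫ + σ * ‖x (k + 1)‖ ^ 2
      ≤ ⟪e k, x (k + 1)⟫)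
    (he : ∀ k < n, ‖e k‖ ≤ r) : ‖x n‖ ≤ r / σ := by
  induction n with
  | zero => rw [h0, norm_zero]; positivity
  | succ k ih =>
    have hprev := ih (fun j hj => hstep j (by omega)) (fun j hj => he j (by omega))
    have hE := he k (by omega)
    have henergy := backwardEuler_energy_step hσ.le hτ (hstep k (by omega))
    have hpos : 0 < σ * (1 + σ * τ) := by positivity
    refine (pow_le_pow_iff_left₀ (norm_nonneg _) (by positivity) two_ne_zero).1 <|
      le_of_mul_le_mul_left ?_ hpos
    calc σ * (1 + σ * τ) * ‖x (k + 1)‖ ^ 2 ≤ σ * ‖x k‖ ^ 2 + τ * ‖e k‖ ^ 2 := henergy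
      _ ≤ σ * (r / σ) ^ 2 + τ * r ^ 2 := by gcongr
      _ = σ * (1 + σ * τ) * (r / σ) ^ 2 := by field_simp

end Energy

theorem sq_le_of_le_add_sqrt {e K σ τ I A M : ℝ} (he : 0 ≤ e) (hK : 1 ≤ K) (hσ : 0 < σ)
    (hI : 0 ≤ I) (hA : 0 ≤ A) (hM : 0 ≤ M) (h : e ≤ K * √I + (K * √A + τ * √M) / σ) :
    e ^ 2 ≤ 3 * K ^ 2 * (1 + (σ ^ 2)⁻¹) * (I + A + τ ^ 2 * M) := by
  set a := K * √I
  set b := K * √A / σ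
  set c := τ * √M / σ
  have habc : e ≤ a + b + c := by rw [add_assoc, ← add_div]; exact h
  have ha : a ^ 2 = K ^ 2 * I := by rw [mul_pow, Real.sq_sqrt hI]
  have hb : b ^ 2 = K ^ 2 * A * (σ ^ 2)⁻¹ := by rw [div_pow, mul_pow, Real.sq_sqrt hA]; rfl
  have hc : c ^ 2 = τ ^ 2 * M * (σ ^ 2)⁻¹ := by rw [div_pow, mul_pow, Real.sq_sqrt hM]; rfl
  have hs : 0 ≤ (σ ^ 2)⁻¹ := by positivity
  have hK2 : 1 ≤ K ^ 2 := one_le_pow₀ hK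
  calc e ^ 2 ≤ (a + b + c) ^ 2 := pow_le_pow_left₀ he habc 2
    _ ≤ 3 * (a ^ 2 + b ^ 2 + c ^ 2) := by
      nlinarith [sq_nonneg (a - b), sq_nonneg (b - c), sq_nonneg (a - c)]
    _ ≤ 3 * K ^ 2 * (1 + (σ ^ 2)⁻¹) * (I + A + τ ^ 2 * M) := by
      rw [ha, hb, hc]
      nlinarith [mul_nonneg (mul_nonneg (sq_nonneg τ) hM) hs, mul_nonneg hs hI,
        mul_nonneg (sq_nonneg K) (mul_nonneg hs hI), mul_nonneg (sq_nonneg K) hA,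
        mul_nonneg (sq_nonneg K) (mul_nonneg (sq_nonneg τ) hM),
        mul_le_mul_of_nonneg_right hK2 (mul_nonneg (mul_nonneg (sq_nonneg τ) hM) hs)]

section BackwardEulerGalerkin

variable {V : Type*} [NormedAddCommGroup V] [InnerProductSpace ℝ V]
  {W : Type*} [NormedAddCommGroup W] [NormedSpace ℝ W]
  {ι : W →L[ℝ] V} {B : W →ₗ[ℝ] W →ₗ[ℝ] ℝ} {Vh : Submodule ℝ W} {P : W →L[ℝ] W} {σ τ : ℝ}

theorem backwardEuler_error_energy_le (hcoer : ∀ u, σ * ‖ι u‖ ^ 2 ≤ B u u)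
    (hPm : ∀ u, P u ∈ Vh) (hPB : ∀ u, ∀ ψ ∈ Vh, B (P u) ψ = B u ψ)
    {u₀ u₁ u₁' v₀ v₁ : W} {f : V} (hv₁ : v₁ ∈ Vh)
    (hweak : ∀ ψ ∈ Vh, ⟪ι u₁', ι ψ⟫ + B u₁ ψ = ⟪f, ι ψ⟫)
    (hscheme : ∀ ψ ∈ Vh, ⟪ι (τ⁻¹ • (v₁ - v₀)), ι ψ⟫ + B v₁ ψ = ⟪f, ι ψ⟫) :
    ⟪τ⁻¹ • (ι (P u₁ - v₁) - ι (P u₀ - v₀)), ι (P u₁ - v₁)⟫ + σ * ‖ι (P u₁ - v₁)‖ ^ 2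
      ≤ ⟪ι (τ⁻¹ • (P u₁ - P u₀) - u₁'), ι (P u₁ - v₁)⟫ := by
  have hθ : P u₁ - v₁ ∈ Vh := Vh.sub_mem (hPm u₁) hv₁
  have hs := hscheme _ hθ
  have hw := hweak _ hθ
  have hp := hPB u₁ _ hθ
  have hc := hcoer (P u₁ - v₁)
  simp only [map_sub, map_smul, LinearMap.sub_apply, inner_sub_left, real_inner_smul_left,
    smul_sub] at hs hw hp hc ⊢
  linarith

theorem norm_backwardEuler_residual_le (hιle : ∀ w, ‖ι w‖ ≤ ‖w‖) {φ φ' φ'' : ℝ → W}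
    {t α μ : ℝ} (hτ : 0 < τ)
    (hφ : ∀ s ∈ Icc t (t + τ), HasDerivWithinAt φ (φ' s) (Icc t (t + τ)) s)
    (hφ' : ∀ s ∈ Icc t (t + τ), HasDerivWithinAt φ' (φ'' s) (Icc t (t + τ)) s)
    (hα : ∀ s ∈ Icc t (t + τ), ‖φ' s - P (φ' s)‖ ≤ α)
    (hμ : ∀ s ∈ Icc t (t + τ), ‖ι (φ'' s)‖ ≤ μ) :
    ‖ι (τ⁻¹ • (P (φ (t + τ)) - P (φ t)) - φ' (t + τ))‖ ≤ α + τ * μ := by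
  have hsplit : ι (τ⁻¹ • (P (φ (t + τ)) - P (φ t)) - φ' (t + τ))
      = ι (τ⁻¹ • ((P (φ (t + τ)) - φ (t + τ)) - (P (φ t) - φ t)))
        + (τ⁻¹ • (ι (φ (t + τ)) - ι (φ t)) - ι (φ' (t + τ))) := by
    simp only [map_sub, map_smul, smul_sub]; abel
  rw [hsplit, mul_comm]
  refine norm_add_le_of_le ((hιle _).trans ?_) ?_
  · exact norm_smul_inv_sub_le_of_norm_deriv_le hτ
      (fun s hs => (P.hasFDerivAt.comp_hasDerivWithinAt s (hφ s hs)).sub (hφ s hs))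
      fun s hs => (norm_sub_rev _ _).trans_le (hα s hs)
  · exact norm_smul_inv_sub_sub_deriv_le hτ
      (fun s hs => ι.hasFDerivAt.comp_hasDerivWithinAt s (hφ s hs))
      (fun s hs => ι.hasFDerivAt.comp_hasDerivWithinAt s (hφ' s hs)) hμ

theorem norm_proj_sub_backwardEuler_le (hιle : ∀ w, ‖ι w‖ ≤ ‖w‖)
    (hcoer : ∀ u, σ * ‖ι u‖ ^ 2 ≤ B u u) (hσ : 0 < σ)
    (hPm : ∀ u, P u ∈ Vh) (hPB : ∀ u, ∀ ψ ∈ Vh, B (P u) ψ = B u ψ)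
    {T : ℝ} {q : ℝ → V} {φ φ' φ'' : ℝ → W}
    (hφ : ∀ t ∈ Icc 0 T, HasDerivWithinAt φ (φ' t) (Icc 0 T) t)
    (hφ' : ∀ t ∈ Icc 0 T, HasDerivWithinAt φ' (φ'' t) (Icc 0 T) t)
    (hweak : ∀ t ∈ Icc 0 T, ∀ ψh ∈ Vh, ⟪ι (φ' t), ι ψh⟫ + B (φ t) ψh = ⟪q t, ι ψh⟫)
    (hτ : 0 < τ) {φh : ℕ → W} (hφhm : ∀ n, φh n ∈ Vh) (hφh0 : φh 0 = P (φ 0))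
    (hscheme : ∀ n : ℕ, 1 ≤ n → (n : ℝ) * τ ≤ T → ∀ ψh ∈ Vh,
      ⟪ι (τ⁻¹ • (φh n - φh (n - 1))), ι ψh⟫ + B (φh n) ψh = ⟪q ((n : ℝ) * τ), ι ψh⟫)
    {n : ℕ} (hnT : (n : ℝ) * τ ≤ T) {α μ : ℝ}
    (hα : ∀ t ∈ Icc 0 ((n : ℝ) * τ), ‖φ' t - P (φ' t)‖ ≤ α)
    (hμ : ∀ t ∈ Icc 0 ((n : ℝ) * τ), ‖ι (φ'' t)‖ ≤ μ) :
    ‖ι (P (φ ((n : ℝ) * τ)) - φh n)‖ ≤ (α + τ * μ) / σ := by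
  have hα0 : 0 ≤ α := (norm_nonneg _).trans (hα 0 ⟨le_rfl, by positivity⟩)
  have hμ0 : 0 ≤ μ := (norm_nonneg _).trans (hμ 0 ⟨le_rfl, by positivity⟩)
  have hstep (k : ℕ) : ((k + 1 : ℕ) : ℝ) * τ = k * τ + τ := by push_cast; ring
  have hsub {k : ℕ} (hk : k < n) : Icc ((k : ℝ) * τ) (k * τ + τ) ⊆ Icc 0 ((n : ℝ) * τ) :=
    Icc_subset_Icc (by positivity) (by rw [← hstep]; gcongr; exact_mod_cast hk)
  refine backwardEuler_norm_le (x := fun k => ι (P (φ ((k : ℝ) * τ)) - φh k))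
    (e := fun k => ι (τ⁻¹ • (P (φ (k * τ + τ)) - P (φ (k * τ))) - φ' (k * τ + τ)))
    hσ hτ (by positivity) (by simp [hφh0]) (fun k hk => ?_) (fun k hk => ?_)
  · have hT : ((k + 1 : ℕ) : ℝ) * τ ≤ T := by
      rw [hstep]; exact (hsub hk (right_mem_Icc.2 (by linarith))).2.trans hnT
    have := backwardEuler_error_energy_le hcoer hPm hPB (u₀ := φ (k * τ)) (hφhm (k + 1))
      (hweak _ ⟨by positivity, hT⟩) (hscheme (k + 1) (by omega) hT)
    simpa only [hstep, Nat.add_sub_cancel] using this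
  · have hsubT := (hsub hk).trans (Icc_subset_Icc_right hnT)
    exact norm_backwardEuler_residual_le hιle hτ
      (fun s hs => (hφ s (hsubT hs)).mono hsubT) (fun s hs => (hφ' s (hsubT hs)).mono hsubT)
      (fun s hs => hα s (hsub hk hs)) (fun s hs => hμ s (hsub hk hs))

end BackwardEulerGalerkin

/-- Abstract error estimate for the fully discrete scheme (Galerkin in space/angle,
implicit Euler in time) for the evolution problem ∂ₜφ + (S+H)φ = q of radiative
transfer: there is a constant C depending only on C_B, β and σ bounding the fully
discrete error at tⁿ = nτ by the best-approximation error of φ(tⁿ), of φ' (uniformly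
in time), and the consistency error τ² sup ‖ι(φ'')‖². -/
theorem stmt_1 (C_B β σ : ℝ) (hσ : 0 < σ) (hβ : 0 < β) :
    ∃ C : ℝ, 0 < C ∧
      ∀ (V : Type) [NormedAddCommGroup V] [InnerProductSpace ℝ V] [CompleteSpace V]
        (W : Type) [NormedAddCommGroup W] [NormedSpace ℝ W]
        (ι : W →ₗ[ℝ] V),
        Function.Injective ι →
        (∀ w : W, ‖ι w‖ ≤ ‖w‖) →
        ∀ B : W →ₗ[ℝ] W →ₗ[ℝ] ℝ,
        (∀ u v : W, |B u v| ≤ C_B * ‖u‖ * ‖v‖) →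
        (∀ u : W, σ * ‖ι u‖ ^ 2 ≤ B u u) →
        ∀ Vh : Submodule ℝ W, FiniteDimensional ℝ Vh →
        (∀ φh ∈ Vh, β * ‖φh‖ ≤ ⨆ ψh : {x : W // x ∈ Vh ∧ x ≠ 0}, B φh ψh / ‖(ψh : W)‖) →
        ∀ Proj : W →ₗ[ℝ] W,
        (∀ u : W, Proj u ∈ Vh) →
        (∀ u : W, ∀ ψh ∈ Vh, B (Proj u) ψh = B u ψh) →
        ∀ T : ℝ, 0 < T →
        ∀ q : ℝ → V, ContinuousOn q (Set.Icc 0 T) →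
        ∀ φ φ' φ'' : ℝ → W,
        (∀ t ∈ Set.Icc 0 T, HasDerivWithinAt φ (φ' t) (Set.Icc 0 T) t) →
        (∀ t ∈ Set.Icc 0 T, HasDerivWithinAt φ' (φ'' t) (Set.Icc 0 T) t) →
        ContinuousOn φ'' (Set.Icc 0 T) →
        (∀ t ∈ Set.Icc 0 T, ∀ ψh ∈ Vh, ⟪ι (φ' t), ι ψh⟫ + B (φ t) ψh = ⟪q t, ι ψh⟫) →
        ∀ τ : ℝ, 0 < τ → τ ≤ 1 / (2 * σ) →
        ∀ φh : ℕ → W,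
        (∀ n : ℕ, φh n ∈ Vh) →
        φh 0 = Proj (φ 0) →
        (∀ n : ℕ, 1 ≤ n → (n : ℝ) * τ ≤ T → ∀ ψh ∈ Vh,
          ⟪ι (τ⁻¹ • (φh n - φh (n - 1))), ι ψh⟫ + B (φh n) ψh = ⟪q ((n : ℝ) * τ), ι ψh⟫) →
        ∀ n : ℕ, (n : ℝ) * τ ≤ T →
          ‖ι (φ ((n : ℝ) * τ)) - ι (φh n)‖ ^ 2 ≤
            C * ((⨅ ψh : Vh, ‖φ ((n : ℝ) * τ) - (ψh : W)‖ ^ 2) +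
              (⨆ t : Set.Icc (0:ℝ) ((n : ℝ) * τ), ⨅ ψh : Vh, ‖φ' t - (ψh : W)‖ ^ 2) +
              τ ^ 2 * ⨆ t : Set.Icc (0:ℝ) ((n : ℝ) * τ), ‖ι (φ'' t)‖ ^ 2) := by
  set K := 1 + max C_B 0 / β
  have hK : 1 ≤ K := le_add_of_nonneg_right (div_nonneg (le_max_right _ _) hβ.le)
  refine ⟨3 * K ^ 2 * (1 + (σ ^ 2)⁻¹), by positivity, ?_⟩
  intro V _ _ _ W _ _ ι _ hιle B hB hcoer Vh _ hinfsup P hPm hPB T _ q _ φ φ' φ'' hφ hφ' hφ''c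
    hweak τ hτ _ φh hφhm hφh0 hscheme n hnT
  have hB' (u v : W) : |B u v| ≤ max C_B 0 * ‖u‖ * ‖v‖ :=
    (hB u v).trans (by gcongr; exact le_max_left _ _)
  have hinfsup : DiscreteInfSup B Vh β := hinfsup
  have hP := hinfsup.norm_proj_le hβ (le_max_right _ _) hB' hPm hPB
  have hquasi := hinfsup.norm_sub_proj_le_mul_sqrt_iInf hβ (le_max_right _ _) hB' hPm hPB
  let ιL : W →L[ℝ] V := ι.mkContinuous 1 fun w => by simpa using hιle w
  have hsub : Icc 0 ((n : ℝ) * τ) ⊆ Icc 0 T := Icc_subset_Icc_right hnT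
  have hφ'c : ContinuousOn φ' (Icc 0 T) := fun s hs => (hφ' s hs).continuousWithinAt
  have hθ := norm_proj_sub_backwardEuler_le (ι := ιL) (P := P.mkContinuous _ hP) hιle hcoer hσ
    hPm hPB hφ hφ' hweak hτ hφhm hφh0 hscheme hnT
    (fun t ht => hinfsup.norm_sub_proj_le_mul_sqrt_iSup hβ (le_max_right _ _) hB' hPm hPB
      (hφ'c.mono hsub) ht)
    (fun t ht => norm_le_sqrt_iSup_sq ((ιL.continuous.comp_continuousOn hφ''c).mono hsub) ht)
  refine sq_le_of_le_add_sqrt (norm_nonneg _) hK hσ (Real.iInf_nonneg fun _ => sq_nonneg _)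
    (Real.iSup_nonneg fun _ => Real.iInf_nonneg fun _ => sq_nonneg _)
    (Real.iSup_nonneg fun _ => sq_nonneg _) ?_
  calc _ = ‖ι (φ ((n : ℝ) * τ) - P (φ ((n : ℝ) * τ))) + ι (P (φ ((n : ℝ) * τ)) - φh n)‖ := by
        simp only [map_sub]; abel_nf
    _ ≤ _ := norm_add_le_of_le ((hιle _).trans (hquasi _)) hθ
end

section
/- Let V⁺ and V⁻ be real inner product spaces, W_h⁺ ⊆ V⁺ and V_h⁻ ⊆ V⁻ subspaces, and A : W_h⁺ → V⁻ a linear map with A(W_h⁺) ⊆ V_h⁻. Let c⁺ : V⁺ × V⁺ → ℝ and c⁻ : V⁻ × V⁻ → ℝ be bilinear forms and 0 < σ̲ ≤ σ̄ constants such that c⁺(x,x) ≥ σ̲‖x‖², c⁻(y,y) ≥ σ̲‖y‖², |c⁺(x,x')| ≤ σ̄‖x‖‖x'‖ and |c⁻(y,y')| ≤ σ̄‖y‖‖y'‖ for all x,x' ∈ V⁺ and y,y' ∈ V⁻. Let r : W_h⁺ × W_h⁺ → ℝ be a symmetric bilinear form with r(x,x) ≥ 0. Define, for φ = (φ⁺,φ⁻)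 and ψ = (ψ⁺,ψ⁻) in W_h⁺ × V_h⁻, the bilinear form B(φ;ψ) = r(φ⁺,ψ⁺) + c⁺(φ⁺,ψ⁺) + c⁻(φ⁻,ψ⁻) − ⟨φ⁻, Aψ⁺⟩ + ⟨Aφ⁺, ψ⁻⟩ and the norm ‖φ‖² = ‖φ⁺‖² + ‖Aφ⁺‖² + r(φ⁺,φ⁺) + ‖φ⁻‖². Then for every φ ∈ W_h⁺ × V_h⁻: sup over nonzero ψ ∈ W_h⁺ × V_h⁻ of B(φ;ψ)/‖ψ‖ is at least β‖φ‖, with β = σ̲ / (2(1+σ̄²)). -/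
/-!
Test `B(φ; ·)` with `ψ = (φ⁺, φ⁻ + α A φ⁺)`, `α = 2β = σ̲ / (1 + σ̄²)`, admissible because
`A φ⁺ ∈ V_h⁻`. The skew terms `-⟨φ⁻, Aψ⁺⟩ + ⟨Aφ⁺, ψ⁻⟩` collapse to `α ‖Aφ⁺‖²`, which controls the
`A`-part of the norm; the cross term `α c⁻(φ⁻, Aφ⁺)` is absorbed by Young's inequality, leaving
`B(φ; ψ) ≥ β (1 + α) ‖φ‖²`, while `‖ψ‖ ≤ (1 + α) ‖φ‖`. Since a real `⨆` of an unbounded family is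
`0`, one also needs `B(φ; ·)` bounded in the energy norm, which is Cauchy–Schwarz for `r`.
-/

open scoped RealInnerProductSpace

lemma le_ciSup_div_of_le {E : Type*} [Zero E] {B N : E → ℝ} (hN : ∀ p ≠ 0, 0 < N p) {C : ℝ}
    (hB : ∀ p, B p ≤ C * N p) {k : ℝ} {q : E} (hq : q ≠ 0) (hk : k * N q ≤ B q) :
    k ≤ ⨆ p : {p : E // p ≠ 0}, B p / N p := by
  refine le_ciSup_of_le ⟨C, ?_⟩ ⟨q, hq⟩ ((le_div_iff₀ (hN q hq)).2 hk)
  rintro _ ⟨⟨p, hp⟩, rfl⟩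
  exact (div_le_iff₀ (hN p hp)).2 (hB p)

namespace EvenOdd

variable {W V : Type*} [NormedAddCommGroup W] [Module ℝ W]
  [NormedAddCommGroup V] [InnerProductSpace ℝ V]

def normSq (A : W →ₗ[ℝ] V) (r : W →ₗ[ℝ] W →ₗ[ℝ] ℝ) (p : W × V) : ℝ :=
  ‖p.1‖ ^ 2 + ‖A p.1‖ ^ 2 + r p.1 p.1 + ‖p.2‖ ^ 2

def form (A : W →ₗ[ℝ] V) (r cp : W →ₗ[ℝ] W →ₗ[ℝ] ℝ) (cm : V →ₗ[ℝ] V →ₗ[ℝ] ℝ)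
    (φ ψ : W × V) : ℝ :=
  r φ.1 ψ.1 + cp φ.1 ψ.1 + cm φ.2 ψ.2 - ⟪φ.2, A ψ.1⟫ + ⟪A φ.1, ψ.2⟫

section normSq

variable {A : W →ₗ[ℝ] V} {r : W →ₗ[ℝ] W →ₗ[ℝ] ℝ}

lemma normSq_pos (hr : ∀ x, 0 ≤ r x x) {p : W × V} (hp : p ≠ 0) : 0 < normSq A r p := by
  have := hr p.1
  rcases eq_or_ne p.1 0 with h1 | h1
  · have := norm_pos_iff.2 fun h2 ↦ hp (Prod.ext h1 h2)
    unfold normSq; positivity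
  · have := norm_pos_iff.2 h1
    unfold normSq; positivity

lemma normSq_nonneg (hr : ∀ x, 0 ≤ r x x) (p : W × V) : 0 ≤ normSq A r p := by
  have := hr p.1
  unfold normSq; positivity

lemma norm_fst_le_sqrt_normSq (hr : ∀ x, 0 ≤ r x x) (p : W × V) : ‖p.1‖ ≤ √(normSq A r p) :=
  Real.le_sqrt_of_sq_le <| by
    unfold normSq; linarith [hr p.1, sq_nonneg ‖A p.1‖, sq_nonneg ‖p.2‖]

lemma norm_map_fst_le_sqrt_normSq (hr : ∀ x, 0 ≤ r x x) (p : W × V) :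
    ‖A p.1‖ ≤ √(normSq A r p) :=
  Real.le_sqrt_of_sq_le <| by
    unfold normSq; linarith [hr p.1, sq_nonneg ‖p.1‖, sq_nonneg ‖p.2‖]

lemma sqrt_apply_fst_le_sqrt_normSq (p : W × V) : √(r p.1 p.1) ≤ √(normSq A r p) :=
  Real.sqrt_le_sqrt <| by
    unfold normSq; linarith [sq_nonneg ‖p.1‖, sq_nonneg ‖A p.1‖, sq_nonneg ‖p.2‖]

lemma norm_snd_le_sqrt_normSq (hr : ∀ x, 0 ≤ r x x) (p : W × V) : ‖p.2‖ ≤ √(normSq A r p) :=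
  Real.le_sqrt_of_sq_le <| by
    unfold normSq; linarith [hr p.1, sq_nonneg ‖p.1‖, sq_nonneg ‖A p.1‖]

lemma sqrt_normSq_add_smul_le (hr : ∀ x, 0 ≤ r x x) (p : W × V) {t : ℝ} (ht : 0 ≤ t) :
    √(normSq A r (p.1, p.2 + t • A p.1)) ≤ (1 + t) * √(normSq A r p) := by
  have hsnd : ‖p.2 + t • A p.1‖ ≤ ‖p.2‖ + t * ‖A p.1‖ := by
    simpa [norm_smul, abs_of_nonneg ht] using norm_add_le p.2 (t • A p.1)
  rw [Real.sqrt_le_left (by positivity), mul_pow, Real.sq_sqrt (normSq_nonneg hr p)]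
  have hsnd_sq := pow_le_pow_left₀ (norm_nonneg _) hsnd 2
  have := hr p.1
  unfold normSq
  nlinarith [mul_nonneg ht (sq_nonneg (‖p.2‖ - ‖A p.1‖)), mul_nonneg ht (sq_nonneg ‖p.1‖),
    mul_nonneg (mul_nonneg ht ht) (sq_nonneg ‖p.1‖), mul_nonneg ht this,
    mul_nonneg (mul_nonneg ht ht) this, mul_nonneg (mul_nonneg ht ht) (sq_nonneg ‖p.2‖)]

end normSq

variable {A : W →ₗ[ℝ] V} {r cp : W →ₗ[ℝ] W →ₗ[ℝ] ℝ} {cm : V →ₗ[ℝ] V →ₗ[ℝ] ℝ}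

lemma form_le (hr : ∀ x, 0 ≤ r x x) (hrsym : ∀ x y, r x y = r y x) {σ : ℝ} (hσ : 0 ≤ σ)
    (hcp : ∀ x x', |cp x x'| ≤ σ * ‖x‖ * ‖x'‖) (hcm : ∀ y y', |cm y y'| ≤ σ * ‖y‖ * ‖y'‖)
    (φ ψ : W × V) :
    form A r cp cm φ ψ ≤
      (√(r φ.1 φ.1) + σ * ‖φ.1‖ + σ * ‖φ.2‖ + ‖φ.2‖ + ‖A φ.1‖) * √(normSq A r ψ) := by
  have hcs : r φ.1 ψ.1 ≤ √(r φ.1 φ.1) * √(r ψ.1 ψ.1) := by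
    rw [← Real.sqrt_mul (hr _)]
    exact (le_abs_self _).trans <| Real.abs_le_sqrt <|
      LinearMap.BilinForm.apply_sq_le_of_symm r hr ⟨hrsym⟩ _ _
  set N := √(normSq A r ψ)
  have h₁ : r φ.1 ψ.1 ≤ √(r φ.1 φ.1) * N := by
    grw [hcs, sqrt_apply_fst_le_sqrt_normSq (A := A) ψ]
  have h₂ : cp φ.1 ψ.1 ≤ σ * ‖φ.1‖ * N := by
    grw [le_abs_self (cp _ _), hcp, norm_fst_le_sqrt_normSq (A := A) hr ψ]
  have h₃ : cm φ.2 ψ.2 ≤ σ * ‖φ.2‖ * N := by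
    grw [le_abs_self (cm _ _), hcm, norm_snd_le_sqrt_normSq (A := A) hr ψ]
  have h₄ : -⟪φ.2, A ψ.1⟫ ≤ ‖φ.2‖ * N := by
    grw [neg_le_abs, abs_real_inner_le_norm, norm_map_fst_le_sqrt_normSq hr ψ]
  have h₅ : ⟪A φ.1, ψ.2⟫ ≤ ‖A φ.1‖ * N := by
    grw [le_abs_self ⟪_, _⟫, abs_real_inner_le_norm, norm_snd_le_sqrt_normSq (A := A) hr ψ]
  unfold form
  linarith

lemma form_add_smul_map (φ : W × V) (t : ℝ) :
    form A r cp cm φ (φ.1, φ.2 + t • A φ.1) =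
      r φ.1 φ.1 + cp φ.1 φ.1 + cm φ.2 φ.2 + t * cm φ.2 (A φ.1) + t * ‖A φ.1‖ ^ 2 := by
  simp only [form, map_add, map_smul, smul_eq_mul, inner_add_right, real_inner_smul_right,
    real_inner_self_eq_norm_sq, real_inner_comm (A φ.1) φ.2]
  ring

lemma mul_normSq_le_form_add_smul_map (hr : ∀ x, 0 ≤ r x x) {σl σu β : ℝ}
    (hβ : 2 * β * (1 + σu ^ 2) = σl) (hβ₀ : 0 ≤ β) (hβ₁ : β ≤ 1 / 4)
    (hcpc : ∀ x, σl * ‖x‖ ^ 2 ≤ cp x x) (hcmc : ∀ y, σl * ‖y‖ ^ 2 ≤ cm y y)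
    (hcm : ∀ y y', |cm y y'| ≤ σu * ‖y‖ * ‖y'‖) (φ : W × V) :
    β * (1 + 2 * β) * normSq A r φ ≤ form A r cp cm φ (φ.1, φ.2 + (2 * β) • A φ.1) := by
  rw [form_add_smul_map]
  have hrx := hr φ.1
  have hcpx := hcpc φ.1
  have hcmy := hcmc φ.2
  have hcross := mul_le_mul_of_nonneg_left (neg_le_of_abs_le (hcm φ.2 (A φ.1)))
    (by positivity : 0 ≤ 2 * β)
  have hβ' : 0 ≤ β * (1 / 4 - β) := mul_nonneg hβ₀ (by linarith)
  unfold normSq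
  subst hβ
  nlinarith [mul_nonneg hβ₀ (sq_nonneg (σu * ‖φ.2‖ - ‖A φ.1‖ / 2)),
    mul_nonneg hβ' (sq_nonneg ‖φ.1‖), mul_nonneg hβ' (sq_nonneg ‖A φ.1‖),
    mul_nonneg hβ' (sq_nonneg ‖φ.2‖), mul_nonneg hβ' hrx,
    mul_nonneg hβ₀ (mul_nonneg (sq_nonneg σu) (sq_nonneg ‖φ.1‖))]

theorem le_iSup_form_div_sqrt_normSq (hr : ∀ x, 0 ≤ r x x) (hrsym : ∀ x y, r x y = r y x)
    {σl σu : ℝ} (hσl : 0 ≤ σl) (hσlu : σl ≤ σu)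
    (hcpc : ∀ x, σl * ‖x‖ ^ 2 ≤ cp x x) (hcmc : ∀ y, σl * ‖y‖ ^ 2 ≤ cm y y)
    (hcpb : ∀ x x', |cp x x'| ≤ σu * ‖x‖ * ‖x'‖) (hcmb : ∀ y y', |cm y y'| ≤ σu * ‖y‖ * ‖y'‖)
    (φ : W × V) :
    σl / (2 * (1 + σu ^ 2)) * √(normSq A r φ) ≤
      ⨆ ψ : {p : W × V // p ≠ 0}, form A r cp cm φ ψ / √(normSq A r ψ) := by
  set β := σl / (2 * (1 + σu ^ 2))
  rcases eq_or_ne φ 0 with rfl | hφ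
  · simp [normSq, form]
  have hσu : 0 ≤ σu := hσl.trans hσlu
  have hβ : 2 * β * (1 + σu ^ 2) = σl := by simp only [β]; field_simp
  have hβ₀ : 0 ≤ β := by positivity
  have hβ₁ : β ≤ 1 / 4 := by
    rw [div_le_iff₀ (by positivity)]; nlinarith [sq_nonneg (σu - 1)]
  set ψ : W × V := (φ.1, φ.2 + (2 * β) • A φ.1)
  have hψ : ψ ≠ 0 := by
    rcases eq_or_ne φ.1 0 with h | h
    · rwa [show ψ = φ from Prod.ext rfl (by simp [ψ, h])]
    · exact fun h' ↦ h (congrArg Prod.fst h')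
  refine le_ciSup_div_of_le (fun p hp ↦ Real.sqrt_pos.2 (normSq_pos hr hp))
    (form_le hr hrsym hσu hcpb hcmb φ) hψ ?_
  calc β * √(normSq A r φ) * √(normSq A r ψ)
      ≤ β * √(normSq A r φ) * ((1 + 2 * β) * √(normSq A r φ)) := by
        gcongr; exact sqrt_normSq_add_smul_le hr φ (by positivity)
    _ = β * (1 + 2 * β) * normSq A r φ := by
        rw [mul_mul_mul_comm, Real.mul_self_sqrt (normSq_nonneg hr φ)]
    _ ≤ form A r cp cm φ ψ :=
        mul_normSq_le_form_add_smul_map hr hβ hβ₀ hβ₁ hcpc hcmc hcmb φ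

end EvenOdd

/-- Discrete inf-sup stability of the even-odd mixed bilinear form of radiative
transfer, with stability constant β = σ̲ / (2(1+σ̄²)). -/
theorem stmt_2
    {Vp Vm : Type*} [NormedAddCommGroup Vp] [InnerProductSpace ℝ Vp]
    [NormedAddCommGroup Vm] [InnerProductSpace ℝ Vm]
    (Whp : Submodule ℝ Vp) (Vhm : Submodule ℝ Vm)
    (A : Whp →ₗ[ℝ] Vm) (hA : ∀ x : Whp, A x ∈ Vhm)
    (cp : Vp →ₗ[ℝ] Vp →ₗ[ℝ] ℝ) (cm : Vm →ₗ[ℝ] Vm →ₗ[ℝ] ℝ)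
    (σl σu : ℝ) (hσl : 0 < σl) (hσlu : σl ≤ σu)
    (hcpc : ∀ x : Vp, σl * ‖x‖ ^ 2 ≤ cp x x)
    (hcmc : ∀ y : Vm, σl * ‖y‖ ^ 2 ≤ cm y y)
    (hcpb : ∀ x x' : Vp, |cp x x'| ≤ σu * ‖x‖ * ‖x'‖)
    (hcmb : ∀ y y' : Vm, |cm y y'| ≤ σu * ‖y‖ * ‖y'‖)
    (r : Whp →ₗ[ℝ] Whp →ₗ[ℝ] ℝ)
    (hrsym : ∀ x y : Whp, r x y = r y x) (hrpos : ∀ x : Whp, 0 ≤ r x x) :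
    ∀ φ : Whp × Vhm,
      (σl / (2 * (1 + σu ^ 2))) *
          Real.sqrt (‖φ.1‖ ^ 2 + ‖A φ.1‖ ^ 2 + r φ.1 φ.1 + ‖φ.2‖ ^ 2) ≤
        ⨆ ψ : {p : Whp × Vhm // p ≠ 0},
          (r φ.1 (ψ : Whp × Vhm).1 + cp (φ.1 : Vp) ((ψ : Whp × Vhm).1 : Vp) +
              cm (φ.2 : Vm) (((ψ : Whp × Vhm).2 : Vhm) : Vm) -
              ⟪(φ.2 : Vm), A (ψ : Whp × Vhm).1⟫ + ⟪A φ.1, (((ψ : Whp × Vhm).2 : Vhm) : Vm)⟫) /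
            Real.sqrt (‖(ψ : Whp × Vhm).1‖ ^ 2 + ‖A (ψ : Whp × Vhm).1‖ ^ 2 +
              r (ψ : Whp × Vhm).1 (ψ : Whp × Vhm).1 + ‖(ψ : Whp × Vhm).2‖ ^ 2) := by
  intro φ
  exact EvenOdd.le_iSup_form_div_sqrt_normSq (A := A.codRestrict Vhm hA)
    (cp := cp.compl₁₂ Whp.subtype Whp.subtype) (cm := cm.compl₁₂ Vhm.subtype Vhm.subtype)
    hrpos hrsym hσl.le hσlu (fun x ↦ hcpc x) (fun y ↦ hcmc y) (fun x x' ↦ hcpb x x')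
    (fun y y' ↦ hcmb y y') φ
end

section
/- Let E be a finite-dimensional real inner product space, σ > 0, and B : E × E → ℝ a bilinear form with B(x,x) ≥ σ‖x‖² for all x ∈ E. Let τ satisfy 0 < τ ≤ 1/(2σ), let φ⁰ ∈ E and q¹, q², … ∈ E, and suppose for each n ≥ 1 that φⁿ ∈ E satisfies (1/τ)⟨φⁿ − φⁿ⁻¹, ψ⟩ + B(φⁿ, ψ) = ⟨qⁿ, ψ⟩ for all ψ ∈ E. Then, with tⁿ = nτ, for every n ≥ 0: ‖φⁿ‖² ≤ e^{−σ tⁿ} ‖φ⁰‖² + (2/σ) Σ_{k=1}^{n} τ e^{−σ(tⁿ − t^k)} ‖q^k‖². -/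
/-!
Testing the scheme with `ψ = φⁿ` and using `⟪φⁿ - φⁿ⁻¹, φⁿ⟫ ≥ (‖φⁿ‖² - ‖φⁿ⁻¹‖²) / 2`, coercivity
and Young's inequality gives `(1 + (3/2) στ) ‖φⁿ‖² ≤ ‖φⁿ⁻¹‖² + (2τ/σ) ‖qⁿ‖²`. For `στ ≤ 1/2` the
factor `1 / (1 + (3/2) στ)` is at most `e^{-στ}`, and unrolling this one-step contraction gives the
estimate.
-/

open scoped RealInnerProductSpace

namespace Real

theorem inv_one_add_three_halves_mul_le_exp_neg {x : ℝ} (hx0 : 0 ≤ x) (hx : x ≤ 1 / 2) :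
    (1 + 3 / 2 * x)⁻¹ ≤ exp (-x) := by
  have hexp : exp x ≤ 1 + 3 / 2 * x := by
    -- `exp x ≤ 1 + x + (3/4) x²` on `[0, 1]`, and `(3/4) x² ≤ x / 2` for `x ≤ 1/2`
    have h := exp_bound' hx0 (by linarith) (n := 2) two_pos
    norm_num [Finset.sum_range_succ] at h
    nlinarith
  rw [exp_neg]
  exact inv_anti₀ (exp_pos x) hexp

end Real

theorem le_exp_mul_add_sum_of_le_exp_mul_add {a g : ℕ → ℝ} {σ τ : ℝ}
    (h : ∀ n, a (n + 1) ≤ Real.exp (-(σ * τ)) * a n + g (n + 1)) (n : ℕ) :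
    a n ≤ Real.exp (-σ * (n * τ)) * a 0 +
      ∑ k ∈ Finset.Icc 1 n, Real.exp (-σ * (n * τ - k * τ)) * g k := by
  induction n with
  | zero => simp
  | succ n ih =>
    have hshift : ∀ t : ℝ, Real.exp (-(σ * τ)) * Real.exp (-σ * t) =
        Real.exp (-σ * (t + τ)) := fun t => by rw [← Real.exp_add]; ring_nf
    calc a (n + 1)
        ≤ Real.exp (-(σ * τ)) * (Real.exp (-σ * (n * τ)) * a 0 +
            ∑ k ∈ Finset.Icc 1 n, Real.exp (-σ * (n * τ - k * τ)) * g k) + g (n + 1) :=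
          (h n).trans (by gcongr)
      _ = _ := by
          rw [Finset.sum_Icc_succ_top (by omega), mul_add, ← mul_assoc, hshift, Finset.mul_sum]
          simp_rw [← mul_assoc, hshift]
          push_cast
          rw [sub_self, mul_zero, Real.exp_zero]
          ring_nf

section ImplicitEuler

variable {E : Type*} [NormedAddCommGroup E] [InnerProductSpace ℝ E]

theorem one_add_mul_norm_sq_le_of_implicit_euler_step {σ τ : ℝ} (hσ : 0 < σ) (hτ : 0 < τ)
    {B : E →ₗ[ℝ] E →ₗ[ℝ] ℝ} (hB : ∀ x : E, σ * ‖x‖ ^ 2 ≤ B x x) {u v f : E}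
    (hstep : (1 / τ) * ⟪u - v, u⟫ + B u u = ⟪f, u⟫) :
    (1 + 3 / 2 * (σ * τ)) * ‖u‖ ^ 2 ≤ ‖v‖ ^ 2 + 2 * τ / σ * ‖f‖ ^ 2 := by
  have hdiff : ⟪u - v, u⟫ = τ * (⟪f, u⟫ - B u u) := by
    field_simp at hstep
    linarith
  have hpolar : (‖u‖ ^ 2 - ‖v‖ ^ 2) / 2 ≤ ⟪u - v, u⟫ := by
    rw [inner_sub_left, real_inner_self_eq_norm_sq]
    nlinarith [real_inner_le_norm v u, sq_nonneg (‖u‖ - ‖v‖)]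
  have hyoung : ⟪f, u⟫ ≤ ‖f‖ ^ 2 / σ + σ * ‖u‖ ^ 2 / 4 := by
    have hsq : 0 ≤ (2 * ‖f‖ - σ * ‖u‖) ^ 2 / (4 * σ) := by positivity
    have hexpand : (2 * ‖f‖ - σ * ‖u‖) ^ 2 / (4 * σ) =
        ‖f‖ ^ 2 / σ + σ * ‖u‖ ^ 2 / 4 - ‖f‖ * ‖u‖ := by
      field_simp
      ring
    linarith [real_inner_le_norm f u]
  have hbound : (‖u‖ ^ 2 - ‖v‖ ^ 2) / 2 ≤ τ * (‖f‖ ^ 2 / σ + σ * ‖u‖ ^ 2 / 4 - σ * ‖u‖ ^ 2) :=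
    calc (‖u‖ ^ 2 - ‖v‖ ^ 2) / 2 ≤ ⟪u - v, u⟫ := hpolar
      _ = τ * (⟪f, u⟫ - B u u) := hdiff
      _ ≤ τ * (‖f‖ ^ 2 / σ + σ * ‖u‖ ^ 2 / 4 - σ * ‖u‖ ^ 2) := by gcongr; exact hB u
  have hforce : 2 * τ / σ * ‖f‖ ^ 2 = 2 * (τ * (‖f‖ ^ 2 / σ)) := by ring
  linarith

theorem norm_sq_le_exp_mul_add_of_implicit_euler_step {σ τ : ℝ} (hσ : 0 < σ) (hτ0 : 0 < τ)
    (hτ : τ ≤ 1 / (2 * σ)) {B : E →ₗ[ℝ] E →ₗ[ℝ] ℝ} (hB : ∀ x : E, σ * ‖x‖ ^ 2 ≤ B x x)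
    {u v f : E} (hstep : (1 / τ) * ⟪u - v, u⟫ + B u u = ⟪f, u⟫) :
    ‖u‖ ^ 2 ≤ Real.exp (-(σ * τ)) * ‖v‖ ^ 2 + 2 * τ / σ * ‖f‖ ^ 2 := by
  have hστ : σ * τ ≤ 1 / 2 := by
    rw [le_div_iff₀ (by positivity)] at hτ
    linarith
  have hcontr := Real.inv_one_add_three_halves_mul_le_exp_neg (by positivity) hστ
  have hdecay : Real.exp (-(σ * τ)) ≤ 1 := Real.exp_le_one_iff.2 (by nlinarith)
  have hforce : 0 ≤ 2 * τ / σ * ‖f‖ ^ 2 := by positivity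
  calc ‖u‖ ^ 2
      ≤ (1 + 3 / 2 * (σ * τ))⁻¹ * (‖v‖ ^ 2 + 2 * τ / σ * ‖f‖ ^ 2) := by
        rw [inv_mul_eq_div, le_div_iff₀ (by positivity), mul_comm]
        exact one_add_mul_norm_sq_le_of_implicit_euler_step hσ hτ0 hB hstep
    _ ≤ Real.exp (-(σ * τ)) * (‖v‖ ^ 2 + 2 * τ / σ * ‖f‖ ^ 2) := by gcongr
    _ ≤ Real.exp (-(σ * τ)) * ‖v‖ ^ 2 + 2 * τ / σ * ‖f‖ ^ 2 := by nlinarith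

end ImplicitEuler

theorem stmt_7_general
    {E : Type*} [NormedAddCommGroup E] [InnerProductSpace ℝ E]
    (σ : ℝ) (hσ : 0 < σ) (B : E →ₗ[ℝ] E →ₗ[ℝ] ℝ) (hB : ∀ x : E, σ * ‖x‖ ^ 2 ≤ B x x)
    (τ : ℝ) (hτ0 : 0 < τ) (hτ : τ ≤ 1 / (2 * σ))
    (φ : ℕ → E) (q : ℕ → E)
    (hscheme : ∀ n : ℕ, 1 ≤ n → ∀ ψ : E,
      (1 / τ) * ⟪φ n - φ (n - 1), ψ⟫ + B (φ n) ψ = ⟪q n, ψ⟫) :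
    ∀ n : ℕ, ‖φ n‖ ^ 2 ≤ Real.exp (-σ * (n * τ)) * ‖φ 0‖ ^ 2 +
      (2 / σ) * ∑ k ∈ Finset.Icc 1 n, τ * Real.exp (-σ * (n * τ - k * τ)) * ‖q k‖ ^ 2 := by
  intro n
  have hstep (m : ℕ) : ‖φ (m + 1)‖ ^ 2 ≤
      Real.exp (-(σ * τ)) * ‖φ m‖ ^ 2 + 2 / σ * τ * ‖q (m + 1)‖ ^ 2 := by
    have h := norm_sq_le_exp_mul_add_of_implicit_euler_step hσ hτ0 hτ hB
      (hscheme (m + 1) (by omega) (φ (m + 1)))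
    rw [Nat.add_sub_cancel] at h
    convert h using 2
    ring
  convert le_exp_mul_add_sum_of_le_exp_mul_add
    (a := fun m => ‖φ m‖ ^ 2) (g := fun k => 2 / σ * τ * ‖q k‖ ^ 2) hstep n using 2
  rw [Finset.mul_sum]
  exact Finset.sum_congr rfl fun k _ => by ring

/-- Discrete energy estimate for the implicit Euler scheme with a coercive
bilinear form, for step sizes 0 < τ ≤ 1/(2σ). -/
theorem stmt_7
    {E : Type*} [NormedAddCommGroup E] [InnerProductSpace ℝ E] [FiniteDimensional ℝ E]
    (σ : ℝ) (hσ : 0 < σ) (B : E →ₗ[ℝ] E →ₗ[ℝ] ℝ) (hB : ∀ x : E, σ * ‖x‖ ^ 2 ≤ B x x)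
    (τ : ℝ) (hτ0 : 0 < τ) (hτ : τ ≤ 1 / (2 * σ))
    (φ : ℕ → E) (q : ℕ → E)
    (hscheme : ∀ n : ℕ, 1 ≤ n → ∀ ψ : E,
      (1 / τ) * ⟪φ n - φ (n - 1), ψ⟫ + B (φ n) ψ = ⟪q n, ψ⟫) :
    ∀ n : ℕ, ‖φ n‖ ^ 2 ≤ Real.exp (-σ * (n * τ)) * ‖φ 0‖ ^ 2 +
      (2 / σ) * ∑ k ∈ Finset.Icc 1 n, τ * Real.exp (-σ * (n * τ - k * τ)) * ‖q k‖ ^ 2 :=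
  stmt_7_general σ hσ B hB τ hτ0 hτ φ q hscheme
end

section
/- Let S² = {s ∈ ℝ³ : |s| = 1} with its standard surface measure dσ. Let k : ℝ³ × [−1,1] → ℝ and σ_t : ℝ³ → ℝ be measurable, set σ_s(r) = ∫_{S²} k(r, s·s') dσ(s') (which is independent of s) and σ_a = σ_t − σ_s, and assume there are constants 0 ≤ k̄ and 0 < σ̲_a ≤ σ̄_a with 0 ≤ k(r,μ) ≤ k̄ for all r, μ and σ̲_a ≤ σ_a(r) ≤ σ̄_a for all r. Let T > 0, let K ⊆ ℝ³ be compact, and let q : [0,T] × ℝ³ × S² → ℝ be continuous and vanish whenever r ∉ K. Suppose φ : [0,T] × ℝ³ × S² → ℝ is continuous, vanishes whenever r ∉ K, has continuous partial derivatives ∂_t φ and ∇_r φ, and satisfies the radiative transfer equation ∂_t φ(t,r,s) + s·∇_r φ(t,r,s) + σ_t(r) φ(t,r,s) = ∫_{S²} k(r, s·s') φ(t,r,s') dσ(s') + q(t,r,s) for all (t,r,s). Then for all t ∈ [0,T]: ∫_{ℝ³×S²} |φ(t,r,s)|² dr dσ(s) ≤ e^{−σ̲_a t} ∫_{ℝ³×S²}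 |φ(0,r,s)|² dr dσ(s) + (1/σ̲_a) ∫₀ᵗ e^{−σ̲_a (t−t')} ∫_{ℝ³×S²} |q(t',r,s)|² dr dσ(s) dt'. -/
/-!
Multiply the equation by `φ` and integrate over phase space `ℝ³ × S²`. The transport term
`φ s·∇φ = ½ s·∇(φ²)` integrates to zero because `φ` has compact support, the collision operator
`φ ↦ ∫ k(r, s·s') (φ(s') - φ(s)) dσ(s')` is nonpositive in `L²(S²)` because its kernel is
symmetric and nonnegative, and absorption together with Young's inequality for the source gives
`d/dt ‖φ‖² ≤ -σ̲ₐ ‖φ‖² + ‖q‖² / σ̲ₐ`. Gronwall's lemma then yields the estimate.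
-/

open MeasureTheory
open scoped RealInnerProductSpace

noncomputable abbrev E3 : Type := EuclideanSpace ℝ (Fin 3)
abbrev Sph : Type := Metric.sphere (0 : E3) 1

/-- The standard surface measure on the unit sphere S² ⊂ ℝ³. -/
noncomputable def sphMeasure : Measure Sph := (volume : Measure E3).toSphere

open Set Function Filter Topology

lemma two_mul_le_of_add_add_eq {u ut g c w σ a : ℝ} (ha : 0 < a) (hσ : a ≤ σ)
    (h : ut + g + σ * u = c + w) :
    2 * u * ut ≤ -2 * (u * g) + 2 * (u * c) - a * u ^ 2 + 1 / a * w ^ 2 := by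
  have hyoung : 2 * u * w ≤ a * u ^ 2 + 1 / a * w ^ 2 := by
    have hsq : 0 ≤ (a * u - w) ^ 2 / a := by positivity
    have hexpand : (a * u - w) ^ 2 / a = a * u ^ 2 + 1 / a * w ^ 2 - 2 * u * w := by
      field_simp; ring
    linarith
  have habs : a * u ^ 2 ≤ σ * u ^ 2 := mul_le_mul_of_nonneg_right hσ (sq_nonneg u)
  linear_combination 2 * u * h + hyoung + 2 * habs

lemma integral_mul_integral_kernel_sub_nonpos {α : Type*} [MeasurableSpace α] {ν : Measure α}
    [SFinite ν] {κ : α → α → ℝ} {u : α → ℝ} (hκ_symm : ∀ s s', κ s s' = κ s' s)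
    (hκ_nonneg : ∀ s s', 0 ≤ κ s s')
    (hint : Integrable (fun p : α × α => κ p.1 p.2 * (u p.1 * (u p.2 - u p.1))) (ν.prod ν)) :
    ∫ s, u s * ∫ s', κ s s' * (u s' - u s) ∂ν ∂ν ≤ 0 := by
  set f : α × α → ℝ := fun p => κ p.1 p.2 * (u p.1 * (u p.2 - u p.1))
  have hiter : ∫ s, u s * ∫ s', κ s s' * (u s' - u s) ∂ν ∂ν = ∫ p, f p ∂(ν.prod ν) := by
    rw [integral_prod _ hint]
    congr 1 with s
    rw [← integral_const_mul]
    congr 1 with s'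
    ring
  -- Symmetrising in `(s, s')` turns the form into `-½ ∬ κ (u s' - u s)²`.
  have hsymm : 2 * ∫ p, f p ∂(ν.prod ν) = ∫ p, -(κ p.1 p.2 * (u p.2 - u p.1) ^ 2) ∂(ν.prod ν) := by
    have hswap : Integrable (fun p => f p.swap) (ν.prod ν) := hint.swap
    calc 2 * ∫ p, f p ∂(ν.prod ν) = ∫ p, f p ∂(ν.prod ν) + ∫ p, f p.swap ∂(ν.prod ν) := by
          rw [integral_prod_swap f]; ring
      _ = ∫ p, (f p + f p.swap) ∂(ν.prod ν) := (integral_add hint hswap).symm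
      _ = _ := by
          congr 1 with p
          simp only [f, Prod.fst_swap, Prod.snd_swap, hκ_symm p.2 p.1]
          ring
  have hnonpos : ∫ p, -(κ p.1 p.2 * (u p.2 - u p.1) ^ 2) ∂(ν.prod ν) ≤ 0 :=
    integral_nonpos fun p => neg_nonpos.2 (mul_nonneg (hκ_nonneg _ _) (sq_nonneg _))
  linarith

lemma integral_mul_inner_gradient_eq_zero {E : Type*} [NormedAddCommGroup E]
    [InnerProductSpace ℝ E] [FiniteDimensional ℝ E] [MeasurableSpace E] [BorelSpace E]
    {μ : Measure E} [μ.IsAddHaarMeasure] {f : E → ℝ} {G : E → E} (hf : HasCompactSupport f)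
    (hG : Continuous G) (hgrad : ∀ x, HasGradientAt f (G x) x) (v : E) :
    ∫ x, f x * ⟪v, G x⟫ ∂μ = 0 := by
  have hfc : Continuous f := continuous_iff_continuousAt.2 fun x => (hgrad x).continuousAt
  have hderiv : ∀ x, fderiv ℝ f x v = ⟪v, G x⟫ := fun x => by
    rw [(hgrad x).hasFDerivAt.fderiv, InnerProductSpace.toDual_apply_apply, real_inner_comm]
  have hdiff : ∀ x, DifferentiableAt ℝ f x := fun x => (hgrad x).hasFDerivAt.differentiableAt
  have hint : ∀ g : E → ℝ, Continuous g →
      Integrable (fun x => f x * g x) μ ∧ Integrable (fun x => g x * f x) μ := fun g hg =>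
    ⟨(hfc.mul hg).integrable_of_hasCompactSupport hf.mul_right,
      (hg.mul hfc).integrable_of_hasCompactSupport hf.mul_left⟩
  have hGv : Continuous fun x => ⟪v, G x⟫ := continuous_const.inner hG
  have hparts := integral_mul_fderiv_eq_neg_fderiv_mul_of_integrable (μ := μ) (f := f) (g := f)
    (v := v) (by simpa only [hderiv] using (hint _ hGv).2)
    (by simpa only [hderiv] using (hint _ hGv).1) (hint f hfc).1 (fun x _ => hdiff x)
    (fun x _ => hdiff x)
  simp only [hderiv] at hparts
  have hcomm : ∫ x, ⟪v, G x⟫ * f x ∂μ = ∫ x, f x * ⟪v, G x⟫ ∂μ := by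
    congr 1 with x; ring
  linarith

lemma antitoneOn_exp_mul_sub_integral {F F' g : ℝ → ℝ} {a T : ℝ}
    (hF : ContinuousOn F (Icc 0 T)) (hg : ContinuousOn g (Icc 0 T))
    (hF' : ∀ t ∈ Ioo 0 T, HasDerivAt F (F' t) t)
    (hle : ∀ t ∈ Ioo 0 T, F' t ≤ -a * F t + g t) :
    AntitoneOn (fun τ => Real.exp (a * τ) * F τ -
      ∫ t' in (0 : ℝ)..τ, Real.exp (a * t') * g t') (Icc 0 T) := by
  set h : ℝ → ℝ := fun τ => Real.exp (a * τ) * g τ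
  have hh : ContinuousOn h (Icc 0 T) := by fun_prop
  have hcont : ContinuousOn (fun τ => ∫ t' in (0 : ℝ)..τ, h t') (Icc 0 T) := by
    by_cases hT : 0 ≤ T
    · have := intervalIntegral.continuousOn_primitive_interval (μ := volume) (a := 0) (b := T)
        (f := h) (by rw [uIcc_of_le hT]; exact hh.integrableOn_Icc)
      rwa [uIcc_of_le hT] at this
    · simp [Icc_eq_empty hT]
  have hderiv : ∀ τ ∈ Ioo 0 T, HasDerivAt (fun τ => Real.exp (a * τ) * F τ -
      ∫ t' in (0 : ℝ)..τ, h t') (Real.exp (a * τ) * (a * F τ + F' τ - g τ)) τ := by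
    intro τ hτ
    have hexp : HasDerivAt (fun τ => Real.exp (a * τ)) (Real.exp (a * τ) * a) τ := by
      simpa using ((hasDerivAt_id τ).const_mul a).exp
    have hprim : HasDerivAt (fun τ => ∫ t' in (0 : ℝ)..τ, h t') (h τ) τ :=
      intervalIntegral.integral_hasDerivAt_right
        ((hh.mono (Icc_subset_Icc le_rfl hτ.2.le)).intervalIntegrable_of_Icc hτ.1.le)
        (hh.stronglyMeasurableAtFilter_nhdsWithin measurableSet_Icc τ |>.filter_mono
          (nhdsWithin_eq_nhds.2 (Icc_mem_nhds hτ.1 hτ.2)).ge)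
        (hh.continuousAt (Icc_mem_nhds hτ.1 hτ.2))
    exact ((hexp.mul (hF' τ hτ)).sub hprim).congr_deriv (by ring)
  refine antitoneOn_of_deriv_nonpos (convex_Icc 0 T)
    ((by fun_prop : Continuous fun τ => Real.exp (a * τ)).continuousOn.mul hF |>.sub hcont)
    (fun τ hτ => ?_) (fun τ hτ => ?_) <;> rw [interior_Icc] at hτ
  · exact (hderiv τ hτ).differentiableAt.differentiableWithinAt
  · rw [(hderiv τ hτ).deriv]
    exact mul_nonpos_of_nonneg_of_nonpos (Real.exp_pos _).le (by linarith [hle τ hτ])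

lemma le_exp_mul_add_integral_of_hasDerivAt_le {F F' g : ℝ → ℝ} {a T : ℝ}
    (hF : ContinuousOn F (Icc 0 T)) (hg : ContinuousOn g (Icc 0 T))
    (hF' : ∀ t ∈ Ioo 0 T, HasDerivAt F (F' t) t)
    (hle : ∀ t ∈ Ioo 0 T, F' t ≤ -a * F t + g t) {t : ℝ} (ht : t ∈ Icc 0 T) :
    F t ≤ Real.exp (-a * t) * F 0 + ∫ t' in (0 : ℝ)..t, Real.exp (-a * (t - t')) * g t' := by
  have hanti : Real.exp (a * t) * F t - ∫ t' in (0 : ℝ)..t, Real.exp (a * t') * g t' ≤ F 0 := by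
    simpa using antitoneOn_exp_mul_sub_integral hF hg hF' hle ⟨le_rfl, ht.1.trans ht.2⟩ ht ht.1
  have hkernel : ∫ t' in (0 : ℝ)..t, Real.exp (-a * (t - t')) * g t' =
      Real.exp (-a * t) * ∫ t' in (0 : ℝ)..t, Real.exp (a * t') * g t' := by
    rw [← intervalIntegral.integral_const_mul]
    congr 1 with t'
    rw [← mul_assoc, ← Real.exp_add]
    ring_nf
  have hcancel : Real.exp (-a * t) * Real.exp (a * t) = 1 := by
    rw [← Real.exp_add]; simp
  rw [hkernel]
  calc F t = Real.exp (-a * t) * (Real.exp (a * t) * F t) := by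
        rw [← mul_assoc, hcancel, one_mul]
    _ ≤ Real.exp (-a * t) * (F 0 + ∫ t' in (0 : ℝ)..t, Real.exp (a * t') * g t') :=
        mul_le_mul_of_nonneg_left (by linarith) (Real.exp_pos _).le
    _ = _ := mul_add _ _ _

lemma ContinuousOn.continuous_comp_prodMk_right {X Y Z : Type*} [TopologicalSpace X]
    [TopologicalSpace Y] [TopologicalSpace Z] {f : X × Y → Z} {s : Set X}
    (hf : ContinuousOn f (s ×ˢ univ)) {x : X} (hx : x ∈ s) : Continuous fun y => f (x, y) :=
  hf.comp_continuous (Continuous.prodMk_right x) fun _ => ⟨hx, trivial⟩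

section Parametric

variable {X : Type*} [TopologicalSpace X] [MeasurableSpace X] [OpensMeasurableSpace X]
  {μ : Measure X} [IsFiniteMeasureOnCompacts μ]

lemma continuousOn_integral_sq {u : ℝ → X → ℝ} {s : Set ℝ} {C : Set X} (hC : IsCompact C)
    (hu : ContinuousOn (uncurry u) (s ×ˢ univ)) (hu_supp : ∀ t ∈ s, ∀ x ∉ C, u t x = 0) :
    ContinuousOn (fun t => ∫ x, u t x ^ 2 ∂μ) s :=
  continuousOn_integral_of_compact_support (f := fun t x => u t x ^ 2) hC (hu.pow 2)
    fun t x ht hx => by simp [hu_supp t ht x hx]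

lemma hasDerivAt_integral_sq [T2Space X] {u u' : ℝ → X → ℝ} {T : ℝ} {C : Set X}
    (hC : IsCompact C)
    (hu : ContinuousOn (uncurry u) (Icc 0 T ×ˢ univ))
    (hu' : ContinuousOn (uncurry u') (Icc 0 T ×ˢ univ))
    (hu_supp : ∀ t ∈ Icc 0 T, ∀ x ∉ C, u t x = 0)
    (hderiv : ∀ x, ∀ t ∈ Ioo 0 T, HasDerivAt (u · x) (u' t x) t) {t₀ : ℝ} (ht₀ : t₀ ∈ Ioo 0 T) :
    HasDerivAt (fun t => ∫ x, u t x ^ 2 ∂μ) (∫ x, 2 * u t₀ x * u' t₀ x ∂μ) t₀ := by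
  have hprod : ContinuousOn (fun p : ℝ × X => 2 * u p.1 p.2 * u' p.1 p.2) (Icc 0 T ×ˢ univ) :=
    (continuousOn_const.mul hu).mul hu'
  obtain ⟨M, hM⟩ := (isCompact_Icc.prod hC).exists_bound_of_continuousOn
    (hprod.mono (prod_mono_right (subset_univ C)))
  have hbound : ∀ t ∈ Icc 0 T, ∀ x, ‖2 * u t x * u' t x‖ ≤ C.indicator (fun _ => M) x := by
    intro t ht x
    by_cases hx : x ∈ C
    · simpa [indicator_of_mem hx] using hM (t, x) ⟨ht, hx⟩
    · simp [indicator_of_notMem hx, hu_supp t ht x hx]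
  have hIcc : Icc 0 T ∈ 𝓝 t₀ := Icc_mem_nhds ht₀.1 ht₀.2
  have ht₀' : t₀ ∈ Icc 0 T := Ioo_subset_Icc_self ht₀
  refine (hasDerivAt_integral_of_dominated_loc_of_deriv_le (interior_mem_nhds.2 hIcc)
    (eventually_of_mem hIcc fun t ht =>
      ((hu.continuous_comp_prodMk_right ht).pow 2).aestronglyMeasurable)
    ?_ ?_ (ae_of_all _ fun x t ht => hbound t (interior_subset ht) x)
    ((integrable_indicator_iff hC.isClosed.measurableSet).2
      (integrableOn_const hC.measure_ne_top))
    (ae_of_all _ fun x t ht => ?_)).2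
  · exact ((hu.continuous_comp_prodMk_right ht₀').pow 2).integrable_of_hasCompactSupport
      (HasCompactSupport.intro hC fun x hx => by simp [hu_supp t₀ ht₀' x hx])
  · exact ((continuous_const.mul (hu.continuous_comp_prodMk_right ht₀')).mul
      (hu'.continuous_comp_prodMk_right ht₀')).aestronglyMeasurable
  · rw [interior_Icc] at ht
    exact ((hderiv x t ht).fun_pow 2).congr_deriv (by push_cast; ring)

end Parametric

instance : IsFiniteMeasure sphMeasure := by unfold sphMeasure; infer_instance

local notation "μΩ" => Measure.prod (volume : Measure E3) sphMeasure

section PhaseSpace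

variable {K : Set E3} {u : E3 → Sph → ℝ}

lemma integrable_of_continuous_of_forall_notMem (hK : IsCompact K) {f : E3 → Sph → ℝ}
    (hf : Continuous fun p : E3 × Sph => f p.1 p.2) (hf_supp : ∀ r s, r ∉ K → f r s = 0) :
    Integrable (fun p : E3 × Sph => f p.1 p.2) μΩ :=
  hf.integrable_of_hasCompactSupport <| HasCompactSupport.intro (hK.prod isCompact_univ)
    fun p hp => hf_supp p.1 p.2 fun h => hp ⟨h, trivial⟩

lemma integrable_mul_inner (hK : IsCompact K) {G : E3 → Sph → E3}
    (hu : Continuous fun p : E3 × Sph => u p.1 p.2) (hG : Continuous fun p : E3 × Sph => G p.1 p.2)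
    (hu_supp : ∀ r s, r ∉ K → u r s = 0) :
    Integrable (fun p : E3 × Sph => u p.1 p.2 * ⟪(p.2 : E3), G p.1 p.2⟫) μΩ :=
  integrable_of_continuous_of_forall_notMem hK (f := fun r s => u r s * ⟪(s : E3), G r s⟫)
    (hu.mul ((continuous_subtype_val.comp continuous_snd).inner hG))
    fun r s hr => by simp only [hu_supp r s hr, zero_mul]

lemma integral_prod_mul_inner_gradient_eq_zero (hK : IsCompact K) {G : E3 → Sph → E3}
    (hu : Continuous fun p : E3 × Sph => u p.1 p.2) (hG : Continuous fun p : E3 × Sph => G p.1 p.2)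
    (hu_supp : ∀ r s, r ∉ K → u r s = 0) (hgrad : ∀ r s, HasGradientAt (u · s) (G r s) r) :
    ∫ p, u p.1 p.2 * ⟪(p.2 : E3), G p.1 p.2⟫ ∂μΩ = 0 := by
  rw [integral_prod_symm _ (integrable_mul_inner hK hu hG hu_supp)]
  refine integral_eq_zero_of_ae (ae_of_all _ fun s => ?_)
  exact integral_mul_inner_gradient_eq_zero
    (HasCompactSupport.intro hK fun r hr => hu_supp r s hr)
    (hG.comp (Continuous.prodMk_left s)) (fun r => hgrad r s) s

end PhaseSpace

lemma inner_mem_Icc_of_mem_sphere (s s' : Sph) : ⟪(s : E3), (s' : E3)⟫ ∈ Icc (-1 : ℝ) 1 := by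
  have h := abs_real_inner_le_norm (s : E3) (s' : E3)
  rw [norm_eq_of_mem_sphere s, norm_eq_of_mem_sphere s', one_mul] at h
  exact abs_le.1 h

noncomputable def collision (k : E3 → ℝ → ℝ) (u : E3 → Sph → ℝ) (r : E3) (s : Sph) : ℝ :=
  ∫ s', k r ⟪(s : E3), (s' : E3)⟫ * (u r s' - u r s) ∂sphMeasure

section Collision

variable {k : E3 → ℝ → ℝ} {kbar : ℝ} {u : E3 → Sph → ℝ}

lemma norm_kernel_le (hk : ∀ r : E3, ∀ μ ∈ Icc (-1 : ℝ) 1, 0 ≤ k r μ ∧ k r μ ≤ kbar)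
    (r : E3) (s s' : Sph) : ‖k r ⟪(s : E3), (s' : E3)⟫‖ ≤ kbar := by
  have h := hk r _ (inner_mem_Icc_of_mem_sphere s s')
  rw [Real.norm_eq_abs, abs_of_nonneg h.1]
  exact h.2

lemma measurable_kernel (hk_meas : Measurable (uncurry k)) :
    Measurable fun x : (E3 × Sph) × Sph => k x.1.1 ⟪(x.1.2 : E3), (x.2 : E3)⟫ :=
  hk_meas.comp (measurable_fst.fst.prodMk (by fun_prop : Continuous fun x : (E3 × Sph) × Sph =>
    ⟪(x.1.2 : E3), (x.2 : E3)⟫).measurable)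

lemma integrable_kernel_mul (hk_meas : Measurable (uncurry k))
    (hk : ∀ r : E3, ∀ μ ∈ Icc (-1 : ℝ) 1, 0 ≤ k r μ ∧ k r μ ≤ kbar) {v : Sph → ℝ}
    (hv : Continuous v) (r : E3) (s : Sph) :
    Integrable (fun s' : Sph => k r ⟪(s : E3), (s' : E3)⟫ * v s') sphMeasure := by
  have hmeas := (measurable_kernel hk_meas).comp
    (by fun_prop : Measurable fun s' : Sph => ((r, s), s'))
  exact (hv.integrable_of_hasCompactSupport (.of_compactSpace v)).bdd_mul
    hmeas.aestronglyMeasurable (ae_of_all _ (norm_kernel_le hk r s))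

lemma collision_eq (hk_meas : Measurable (uncurry k))
    (hk : ∀ r : E3, ∀ μ ∈ Icc (-1 : ℝ) 1, 0 ≤ k r μ ∧ k r μ ≤ kbar) {σs : E3 → ℝ}
    (hσs : ∀ (r : E3) (s : Sph), σs r = ∫ s', k r ⟪(s : E3), (s' : E3)⟫ ∂sphMeasure)
    {r : E3} (hu : Continuous (u r)) (s : Sph) :
    collision k u r s =
      (∫ s', k r ⟪(s : E3), (s' : E3)⟫ * u r s' ∂sphMeasure) - σs r * u r s := by
  simp only [collision, mul_sub]
  rw [integral_sub (integrable_kernel_mul hk_meas hk hu r s)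
    (integrable_kernel_mul hk_meas hk continuous_const r s), integral_mul_const, hσs r s]

lemma integral_mul_collision_nonpos (hk_meas : Measurable (uncurry k))
    (hk : ∀ r : E3, ∀ μ ∈ Icc (-1 : ℝ) 1, 0 ≤ k r μ ∧ k r μ ≤ kbar) {r : E3}
    (hu : Continuous (u r)) :
    ∫ s, u r s * collision k u r s ∂sphMeasure ≤ 0 := by
  have hmeas := (measurable_kernel hk_meas).comp
    (by fun_prop : Measurable fun p : Sph × Sph => ((r, p.1), p.2))
  refine integral_mul_integral_kernel_sub_nonpos
    (κ := fun s s' : Sph => k r ⟪(s : E3), (s' : E3)⟫) (fun _ _ => by rw [real_inner_comm])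
    (fun s s' => (hk r _ (inner_mem_Icc_of_mem_sphere s s')).1) ?_
  exact (Continuous.integrable_of_hasCompactSupport (by fun_prop) (.of_compactSpace _)).bdd_mul
    hmeas.aestronglyMeasurable (ae_of_all _ fun p => norm_kernel_le hk r p.1 p.2)

lemma integrable_mul_collision (hk_meas : Measurable (uncurry k))
    (hk : ∀ r : E3, ∀ μ ∈ Icc (-1 : ℝ) 1, 0 ≤ k r μ ∧ k r μ ≤ kbar) {K : Set E3}
    (hK : IsCompact K) (hu : Continuous fun p : E3 × Sph => u p.1 p.2)
    (hu_supp : ∀ r s, r ∉ K → u r s = 0) :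
    Integrable (fun p : E3 × Sph => u p.1 p.2 * collision k u p.1 p.2) μΩ := by
  obtain ⟨M, hM⟩ := hu.bounded_above_of_compact_support <|
    HasCompactSupport.intro (hK.prod isCompact_univ) fun p hp =>
      hu_supp p.1 p.2 fun h => hp ⟨h, trivial⟩
  have hmeas : Measurable fun x : (E3 × Sph) × Sph =>
      k x.1.1 ⟪(x.1.2 : E3), (x.2 : E3)⟫ * (u x.1.1 x.2 - u x.1.1 x.1.2) :=
    (measurable_kernel hk_meas).mul
      ((hu.measurable.comp (measurable_fst.fst.prodMk measurable_snd)).sub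
        (hu.measurable.comp measurable_fst))
  refine (integrable_of_continuous_of_forall_notMem hK hu hu_supp).mul_bdd
    hmeas.stronglyMeasurable.integral_prod_right'.aestronglyMeasurable
    (ae_of_all _ fun p => norm_integral_le_of_norm_le_const (C := kbar * (M + M))
      (ae_of_all _ fun s' => ?_))
  rw [norm_mul]
  exact mul_le_mul (norm_kernel_le hk _ _ _)
    ((norm_sub_le _ _).trans (add_le_add (hM (p.1, s')) (hM p)))
    (norm_nonneg _) ((norm_nonneg _).trans (norm_kernel_le hk p.1 p.2 s'))

lemma integral_prod_mul_collision_nonpos (hk_meas : Measurable (uncurry k))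
    (hk : ∀ r : E3, ∀ μ ∈ Icc (-1 : ℝ) 1, 0 ≤ k r μ ∧ k r μ ≤ kbar) {K : Set E3}
    (hK : IsCompact K) (hu : Continuous fun p : E3 × Sph => u p.1 p.2)
    (hu_supp : ∀ r s, r ∉ K → u r s = 0) :
    ∫ p, u p.1 p.2 * collision k u p.1 p.2 ∂μΩ ≤ 0 := by
  rw [integral_prod _ (integrable_mul_collision hk_meas hk hK hu hu_supp)]
  exact integral_nonpos fun r =>
    integral_mul_collision_nonpos hk_meas hk (hu.comp (Continuous.prodMk_right r))

end Collision

lemma integral_two_mul_timeDeriv_le {k : E3 → ℝ → ℝ} {σt σs σa : E3 → ℝ} {kbar a : ℝ}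
    {K : Set E3} (hk_meas : Measurable (uncurry k))
    (hk : ∀ r : E3, ∀ μ ∈ Icc (-1 : ℝ) 1, 0 ≤ k r μ ∧ k r μ ≤ kbar)
    (hσs : ∀ (r : E3) (s : Sph), σs r = ∫ s', k r ⟪(s : E3), (s' : E3)⟫ ∂sphMeasure)
    (hσa : ∀ r, σa r = σt r - σs r) (ha : 0 < a) (hσa_lo : ∀ r, a ≤ σa r) (hK : IsCompact K)
    {u ut w : E3 → Sph → ℝ} {G : E3 → Sph → E3}
    (hu : Continuous fun p : E3 × Sph => u p.1 p.2)
    (hut : Continuous fun p : E3 × Sph => ut p.1 p.2)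
    (hG : Continuous fun p : E3 × Sph => G p.1 p.2)
    (hw : Continuous fun p : E3 × Sph => w p.1 p.2)
    (hu_supp : ∀ r s, r ∉ K → u r s = 0) (hw_supp : ∀ r s, r ∉ K → w r s = 0)
    (hgrad : ∀ r s, HasGradientAt (u · s) (G r s) r)
    (heq : ∀ r s, ut r s + ⟪(s : E3), G r s⟫ + σt r * u r s =
      (∫ s', k r ⟪(s : E3), (s' : E3)⟫ * u r s' ∂sphMeasure) + w r s) :
    ∫ p, 2 * u p.1 p.2 * ut p.1 p.2 ∂μΩ ≤
      -a * ∫ p, u p.1 p.2 ^ 2 ∂μΩ + 1 / a * ∫ p, w p.1 p.2 ^ 2 ∂μΩ := by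
  have hpoint : ∀ p : E3 × Sph, 2 * u p.1 p.2 * ut p.1 p.2 ≤
      -2 * (u p.1 p.2 * ⟪(p.2 : E3), G p.1 p.2⟫) + 2 * (u p.1 p.2 * collision k u p.1 p.2) -
        a * u p.1 p.2 ^ 2 + 1 / a * w p.1 p.2 ^ 2 := fun ⟨r, s⟩ => by
    refine two_mul_le_of_add_add_eq ha (hσa_lo r) ?_
    rw [collision_eq hk_meas hk hσs (hu.comp (Continuous.prodMk_right r))]
    linear_combination heq r s + u r s * hσa r
  have I_lhs := integrable_of_continuous_of_forall_notMem hK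
    (f := fun r s => 2 * u r s * ut r s) (by fun_prop) fun r s hr => by simp [hu_supp r s hr]
  have I_tr := integrable_mul_inner hK hu hG hu_supp
  have I_col := integrable_mul_collision hk_meas hk hK hu hu_supp
  have I_u := integrable_of_continuous_of_forall_notMem hK
    (f := fun r s => u r s ^ 2) (by fun_prop) fun r s hr => by simp [hu_supp r s hr]
  have I_w := integrable_of_continuous_of_forall_notMem hK
    (f := fun r s => w r s ^ 2) (by fun_prop) fun r s hr => by simp [hw_supp r s hr]
  have I_tr_col : Integrable (fun p : E3 × Sph => -2 * (u p.1 p.2 * ⟪(p.2 : E3), G p.1 p.2⟫) +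
      2 * (u p.1 p.2 * collision k u p.1 p.2)) μΩ :=
    (I_tr.const_mul _).add (I_col.const_mul _)
  calc ∫ p, 2 * u p.1 p.2 * ut p.1 p.2 ∂μΩ
      ≤ ∫ p, (-2 * (u p.1 p.2 * ⟪(p.2 : E3), G p.1 p.2⟫) +
          2 * (u p.1 p.2 * collision k u p.1 p.2) - a * u p.1 p.2 ^ 2 +
          1 / a * w p.1 p.2 ^ 2) ∂μΩ :=
        integral_mono I_lhs ((I_tr_col.sub (I_u.const_mul _)).add (I_w.const_mul _)) hpoint
    _ = -2 * ∫ p, u p.1 p.2 * ⟪(p.2 : E3), G p.1 p.2⟫ ∂μΩ +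
          2 * ∫ p, u p.1 p.2 * collision k u p.1 p.2 ∂μΩ -
          a * ∫ p, u p.1 p.2 ^ 2 ∂μΩ + 1 / a * ∫ p, w p.1 p.2 ^ 2 ∂μΩ := by
        rw [integral_add ?_ (I_w.const_mul _), integral_sub I_tr_col (I_u.const_mul _),
          integral_add (I_tr.const_mul _) (I_col.const_mul _), integral_const_mul,
          integral_const_mul, integral_const_mul, integral_const_mul]
        exact I_tr_col.sub (I_u.const_mul _)
    _ ≤ -a * ∫ p, u p.1 p.2 ^ 2 ∂μΩ + 1 / a * ∫ p, w p.1 p.2 ^ 2 ∂μΩ := by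
        rw [integral_prod_mul_inner_gradient_eq_zero hK hu hG hu_supp hgrad]
        linarith [integral_prod_mul_collision_nonpos hk_meas hk hK hu hu_supp]

theorem stmt_8_general
    (k : E3 → ℝ → ℝ) (σt : E3 → ℝ)
    (hk_meas : Measurable (Function.uncurry k))
    (σs σa : E3 → ℝ)
    (hσs : ∀ (r : E3) (s : Sph), σs r = ∫ s' : Sph, k r ⟪(s : E3), (s' : E3)⟫ ∂sphMeasure)
    (hσa : ∀ r : E3, σa r = σt r - σs r)
    (kbar σalo σahi : ℝ)
    (hk : ∀ r : E3, ∀ μ ∈ Set.Icc (-1 : ℝ) 1, 0 ≤ k r μ ∧ k r μ ≤ kbar)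
    (hσa0 : 0 < σalo) (hσab : ∀ r : E3, σalo ≤ σa r ∧ σa r ≤ σahi)
    (T : ℝ) (K : Set E3) (hK : IsCompact K)
    (q : ℝ → E3 → Sph → ℝ)
    (hq_cont : ContinuousOn (fun p : ℝ × E3 × Sph => q p.1 p.2.1 p.2.2)
      (Set.Icc 0 T ×ˢ Set.univ))
    (hq_supp : ∀ (t : ℝ) (r : E3) (s : Sph), r ∉ K → q t r s = 0)
    (φ φt : ℝ → E3 → Sph → ℝ) (φr : ℝ → E3 → Sph → E3)
    (hφ_cont : ContinuousOn (fun p : ℝ × E3 × Sph => φ p.1 p.2.1 p.2.2)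
      (Set.Icc 0 T ×ˢ Set.univ))
    (hφt_cont : ContinuousOn (fun p : ℝ × E3 × Sph => φt p.1 p.2.1 p.2.2)
      (Set.Icc 0 T ×ˢ Set.univ))
    (hφr_cont : ContinuousOn (fun p : ℝ × E3 × Sph => φr p.1 p.2.1 p.2.2)
      (Set.Icc 0 T ×ˢ Set.univ))
    (hφ_supp : ∀ (t : ℝ) (r : E3) (s : Sph), r ∉ K → φ t r s = 0)
    (hφt : ∀ (r : E3) (s : Sph), ∀ t ∈ Set.Icc 0 T,
      HasDerivWithinAt (fun t' => φ t' r s) (φt t r s) (Set.Icc 0 T) t)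
    (hφr : ∀ t ∈ Set.Icc 0 T, ∀ (r : E3) (s : Sph),
      HasGradientAt (fun r' => φ t r' s) (φr t r s) r)
    (heq : ∀ t ∈ Set.Icc 0 T, ∀ (r : E3) (s : Sph),
      φt t r s + ⟪(s : E3), φr t r s⟫ + σt r * φ t r s =
        (∫ s' : Sph, k r ⟪(s : E3), (s' : E3)⟫ * φ t r s' ∂sphMeasure) + q t r s) :
    ∀ t ∈ Set.Icc 0 T,
      (∫ p : E3 × Sph, (φ t p.1 p.2) ^ 2 ∂((volume : Measure E3).prod sphMeasure)) ≤
        Real.exp (-σalo * t) *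
            (∫ p : E3 × Sph, (φ 0 p.1 p.2) ^ 2 ∂((volume : Measure E3).prod sphMeasure)) +
          (1 / σalo) * ∫ t' in (0 : ℝ)..t, Real.exp (-σalo * (t - t')) *
            ∫ p : E3 × Sph, (q t' p.1 p.2) ^ 2 ∂((volume : Measure E3).prod sphMeasure) := by
  intro t ht
  have hC : IsCompact (K ×ˢ (univ : Set Sph)) := hK.prod isCompact_univ
  have hφ_supp' : ∀ τ ∈ Icc 0 T, ∀ p ∉ K ×ˢ univ, φ τ p.1 p.2 = 0 :=
    fun τ _ p hp => hφ_supp τ p.1 p.2 fun h => hp ⟨h, trivial⟩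
  have hq_supp' : ∀ τ ∈ Icc 0 T, ∀ p ∉ K ×ˢ univ, q τ p.1 p.2 = 0 :=
    fun τ _ p hp => hq_supp τ p.1 p.2 fun h => hp ⟨h, trivial⟩
  have hE := continuousOn_integral_sq (μ := μΩ) (u := fun τ (p : E3 × Sph) => φ τ p.1 p.2)
    hC hφ_cont hφ_supp'
  have hQ := continuousOn_integral_sq (μ := μΩ) (u := fun τ (p : E3 × Sph) => q τ p.1 p.2)
    hC hq_cont hq_supp'
  have hE' : ∀ τ ∈ Ioo 0 T, HasDerivAt (fun τ => ∫ p, φ τ p.1 p.2 ^ 2 ∂μΩ)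
      (∫ p, 2 * φ τ p.1 p.2 * φt τ p.1 p.2 ∂μΩ) τ := fun τ hτ =>
    hasDerivAt_integral_sq (u := fun τ (p : E3 × Sph) => φ τ p.1 p.2)
      (u' := fun τ (p : E3 × Sph) => φt τ p.1 p.2) hC hφ_cont hφt_cont hφ_supp'
      (fun p τ hτ => (hφt p.1 p.2 τ (Ioo_subset_Icc_self hτ)).hasDerivAt
        (Icc_mem_nhds hτ.1 hτ.2)) hτ
  have hdiss : ∀ τ ∈ Ioo 0 T, ∫ p, 2 * φ τ p.1 p.2 * φt τ p.1 p.2 ∂μΩ ≤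
      -σalo * ∫ p, φ τ p.1 p.2 ^ 2 ∂μΩ + 1 / σalo * ∫ p, q τ p.1 p.2 ^ 2 ∂μΩ := fun τ hτ =>
    have hτ' := Ioo_subset_Icc_self hτ
    integral_two_mul_timeDeriv_le hk_meas hk hσs hσa hσa0 (fun r => (hσab r).1) hK
      (hφ_cont.continuous_comp_prodMk_right hτ') (hφt_cont.continuous_comp_prodMk_right hτ')
      (hφr_cont.continuous_comp_prodMk_right hτ') (hq_cont.continuous_comp_prodMk_right hτ')
      (hφ_supp τ) (hq_supp τ) (hφr τ hτ') (heq τ hτ')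
  refine (le_exp_mul_add_integral_of_hasDerivAt_le hE (hQ.const_mul (1 / σalo)) hE' hdiss
    ht).trans_eq ?_
  rw [← intervalIntegral.integral_const_mul]
  congr 1
  exact intervalIntegral.integral_congr fun t' _ => by ring

/-- Energy estimate for the time-dependent mono-energetic radiative transfer
equation ∂ₜφ + s·∇ᵣφ + σₜφ = ∫ k(r,s·s')φ(·,s')dσ(s') + q, with absorption
coefficient σₐ = σₜ - σₛ bounded below by σ̲ₐ > 0 and compactly supported data. -/
theorem stmt_8
    (k : E3 → ℝ → ℝ) (σt : E3 → ℝ)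
    (hk_meas : Measurable (Function.uncurry k)) (hσt_meas : Measurable σt)
    (σs σa : E3 → ℝ)
    (hσs : ∀ (r : E3) (s : Sph), σs r = ∫ s' : Sph, k r ⟪(s : E3), (s' : E3)⟫ ∂sphMeasure)
    (hσa : ∀ r : E3, σa r = σt r - σs r)
    (kbar σalo σahi : ℝ) (hkbar : 0 ≤ kbar)
    (hk : ∀ r : E3, ∀ μ ∈ Set.Icc (-1 : ℝ) 1, 0 ≤ k r μ ∧ k r μ ≤ kbar)
    (hσa0 : 0 < σalo) (hσaa : σalo ≤ σahi) (hσab : ∀ r : E3, σalo ≤ σa r ∧ σa r ≤ σahi)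
    (T : ℝ) (hT : 0 < T) (K : Set E3) (hK : IsCompact K)
    (q : ℝ → E3 → Sph → ℝ)
    (hq_cont : ContinuousOn (fun p : ℝ × E3 × Sph => q p.1 p.2.1 p.2.2)
      (Set.Icc 0 T ×ˢ Set.univ))
    (hq_supp : ∀ (t : ℝ) (r : E3) (s : Sph), r ∉ K → q t r s = 0)
    (φ φt : ℝ → E3 → Sph → ℝ) (φr : ℝ → E3 → Sph → E3)
    (hφ_cont : ContinuousOn (fun p : ℝ × E3 × Sph => φ p.1 p.2.1 p.2.2)
      (Set.Icc 0 T ×ˢ Set.univ))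
    (hφt_cont : ContinuousOn (fun p : ℝ × E3 × Sph => φt p.1 p.2.1 p.2.2)
      (Set.Icc 0 T ×ˢ Set.univ))
    (hφr_cont : ContinuousOn (fun p : ℝ × E3 × Sph => φr p.1 p.2.1 p.2.2)
      (Set.Icc 0 T ×ˢ Set.univ))
    (hφ_supp : ∀ (t : ℝ) (r : E3) (s : Sph), r ∉ K → φ t r s = 0)
    (hφt : ∀ (r : E3) (s : Sph), ∀ t ∈ Set.Icc 0 T,
      HasDerivWithinAt (fun t' => φ t' r s) (φt t r s) (Set.Icc 0 T) t)
    (hφr : ∀ t ∈ Set.Icc 0 T, ∀ (r : E3) (s : Sph),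
      HasGradientAt (fun r' => φ t r' s) (φr t r s) r)
    (heq : ∀ t ∈ Set.Icc 0 T, ∀ (r : E3) (s : Sph),
      φt t r s + ⟪(s : E3), φr t r s⟫ + σt r * φ t r s =
        (∫ s' : Sph, k r ⟪(s : E3), (s' : E3)⟫ * φ t r s' ∂sphMeasure) + q t r s) :
    ∀ t ∈ Set.Icc 0 T,
      (∫ p : E3 × Sph, (φ t p.1 p.2) ^ 2 ∂((volume : Measure E3).prod sphMeasure)) ≤
        Real.exp (-σalo * t) *
            (∫ p : E3 × Sph, (φ 0 p.1 p.2) ^ 2 ∂((volume : Measure E3).prod sphMeasure)) +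
          (1 / σalo) * ∫ t' in (0 : ℝ)..t, Real.exp (-σalo * (t - t')) *
            ∫ p : E3 × Sph, (q t' p.1 p.2) ^ 2 ∂((volume : Measure E3).prod sphMeasure) :=
  stmt_8_general k σt hk_meas σs σa hσs hσa kbar σalo σahi hk hσa0 hσab T K hK q hq_cont hq_supp φ
    φt φr hφ_cont hφt_cont hφr_cont hφ_supp hφt hφr heq
end
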